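/- arXiv:1703.02485 — 10 statements merged into one kernel-verified Lean document; each statement's English description precedes it below -/
import Mathlib

section
/- Let k ≥ 1 be an integer and let (Q, ≤) be a preorder that is a well-quasi-ordering, i.e., for every sequence q_0, q_1, q_2, … in Q there exist indices i < j with q_i ≤ q_j. Then for every sequence (G_0, f_0), (G_1, f_1), (G_2, f_2), … in which each G_n is a finite simple graph containing no path on k vertices as a subgraph and each f_n maps V(G_n) to Q, there exist indices i < j and an injective map σ : V(G_i) → V(G_j) such that uv is an edge of G_i if and only if σ(u)σ(v) is an edge of G_j, and f_i(v) ≤ f_j(σ(v)) for every vertex v of G_i. -/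
open SimpleGraph

/-- `H` occurs as a subgraph of `G`: an injective map sending edges to edges. -/
def ContainsSubgraph {W V : Type*} (H : SimpleGraph W) (G : SimpleGraph V) : Prop :=
  ∃ σ : W → V, Function.Injective σ ∧ ∀ ⦃u v⦄, H.Adj u v → G.Adj (σ u) (σ v)

/-!
A graph with no path on `k` vertices has an elimination forest of height at most `k`: a rooted
forest on its vertex set in which every edge joins a vertex to one of its ancestors. To build it,
pick a root `r` all of whose paths are short, recurse on `G - r` rooting every component at a
neighbour of `r`, and treat the other components of `G` alike; tree paths are then graph paths.

Label every vertex by its `Q`-label and its adjacency pattern towards its ancestors. Forests of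
bounded height with well-quasi-ordered labels are well-quasi-ordered under root-preserving
embeddings (Higman's lemma, once per level). An embedding of labelled forests preserves depth and
ancestry, so the patterns turn it into an induced embedding of the graphs.
-/

universe u

theorem WellQuasiOrdered.sublistForall₂ {α : Type*} {r : α → α → Prop} [IsPreorder α r]
    (hr : WellQuasiOrdered r) : WellQuasiOrdered (List.SublistForall₂ r) := by
  rw [← Set.partiallyWellOrderedOn_univ_iff] at hr ⊢
  simpa using hr.partiallyWellOrderedOn_sublistForall₂ r

theorem List.eq_of_getElem?_eq_of_length_le {α : Type*} {k : ℕ} {l₁ l₂ : List α}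
    (h₁ : l₁.length ≤ k) (h₂ : l₂.length ≤ k) (h : ∀ i : Fin k, l₁[(i : ℕ)]? = l₂[(i : ℕ)]?) :
    l₁ = l₂ :=
  List.ext_getElem? fun i => if hi : i < k then h ⟨i, hi⟩ else by
    rw [List.getElem?_eq_none (by omega), List.getElem?_eq_none (by omega)]

/-- Rooted trees of height at most `h`. -/
def HTree (α : Type u) : ℕ → Type u
  | 0 => PEmpty
  | h + 1 => α × List (HTree α h)

namespace HTree
variable {α : Type u} {β γ δ : Type*} {h : ℕ}

instance : IsEmpty (HTree α 0) := inferInstanceAs (IsEmpty PEmpty)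

def map (φ : α → β) : ∀ {h}, HTree α h → HTree β h
  | 0, t => isEmptyElim t
  | _ + 1, t => (φ t.1, t.2.map (map φ))

def Embeds (r : α → β → Prop) : ∀ {h}, HTree α h → HTree β h → Prop
  | 0, _, _ => True
  | _ + 1, t, u => r t.1 u.1 ∧ List.SublistForall₂ (Embeds r) t.2 u.2

theorem embeds_map_iff {r : α → β → Prop} {φ : γ → α} {ψ : δ → β} :
    ∀ {h} {t : HTree γ h} {u : HTree δ h},
      Embeds r (t.map φ) (u.map ψ) ↔ Embeds (fun a b => r (φ a) (ψ b)) t u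
  | 0, t, _ => isEmptyElim t
  | _ + 1, _, _ => by simp [Embeds, map, embeds_map_iff]

section Preorder
variable {r : α → α → Prop}

theorem embeds_refl [Std.Refl r] : ∀ {h} (t : HTree α h), Embeds r t t
  | 0, _ => trivial
  | h + 1, t =>
    have : Std.Refl (Embeds r (h := h)) := ⟨embeds_refl⟩
    ⟨refl t.1, refl t.2⟩

theorem embeds_trans [IsTrans α r] :
    ∀ {h} {t u w : HTree α h}, Embeds r t u → Embeds r u w → Embeds r t w
  | 0, _, _, _, _, _ => trivial
  | h + 1, _, _, _, htu, huw =>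
    have : IsTrans _ (Embeds r (h := h)) := ⟨fun _ _ _ => embeds_trans⟩
    ⟨_root_.trans htu.1 huw.1, _root_.trans htu.2 huw.2⟩

instance [IsPreorder α r] : IsPreorder (HTree α h) (Embeds r) where
  refl := embeds_refl
  trans _ _ _ := embeds_trans

/-- Bounded-height version of Kruskal's tree theorem: Higman's lemma, once per level. -/
theorem wellQuasiOrdered_embeds [IsPreorder α r] (hr : WellQuasiOrdered r) :
    ∀ h, WellQuasiOrdered (Embeds r (h := h))
  | 0 => wellQuasiOrdered_of_isEmpty _
  | h + 1 => hr.prod (wellQuasiOrdered_embeds hr h).sublistForall₂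

end Preorder

/-- The nodes of a forest, each paired with its proper ancestors, nearest first. -/
def nodes : ∀ {h}, List (HTree α h) → List (α × List α)
  | 0, _ => []
  | _ + 1, ts => ts.flatMap fun t => (t.1, []) :: (nodes t.2).map fun p => (p.1, p.2 ++ [t.1])

def labels (ts : List (HTree α h)) : List α := (nodes ts).map Prod.fst

@[simp] theorem nodes_nil : nodes ([] : List (HTree α h)) = [] := by
  cases h <;> rfl

theorem nodes_append (ts us : List (HTree α h)) : nodes (ts ++ us) = nodes ts ++ nodes us := by
  cases h <;> simp [nodes]

theorem labels_append (ts us : List (HTree α h)) : labels (ts ++ us) = labels ts ++ labels us := by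
  rw [labels, nodes_append, List.map_append]; rfl

theorem nodes_singleton (t : HTree α (h + 1)) :
    nodes [t] = (t.1, []) :: (nodes t.2).map fun p => (p.1, p.2 ++ [t.1]) := by
  simp [nodes]

theorem labels_singleton (t : HTree α (h + 1)) : labels [t] = t.1 :: labels t.2 := by
  simp [labels, nodes_singleton, Function.comp_def]

theorem length_lt_of_mem_nodes : ∀ {h} {ts : List (HTree α h)} {p}, p ∈ nodes ts → p.2.length < h
  | 0, _, _, hp => by simp [nodes] at hp
  | _ + 1, _, _, hp => by
    simp only [nodes, List.mem_flatMap, List.mem_cons, List.mem_map] at hp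
    obtain ⟨t, -, rfl | ⟨q, hq, rfl⟩⟩ := hp
    · simp
    · simpa using length_lt_of_mem_nodes hq

theorem nodes_cons (t : HTree α h) (ts : List (HTree α h)) :
    nodes (t :: ts) = nodes [t] ++ nodes ts := by
  rw [← nodes_append, List.singleton_append]

theorem labels_cons (t : HTree α h) (ts : List (HTree α h)) :
    labels (t :: ts) = labels [t] ++ labels ts := by
  rw [labels, labels, labels, nodes_cons, List.map_append]

theorem mem_labels_of_mem_ancestors : ∀ {h} {ts : List (HTree α h)} {p x}, p ∈ nodes ts →
    x ∈ p.2 → x ∈ labels ts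
  | 0, _, _, _, hp, _ => by simp [nodes] at hp
  | _ + 1, [], _, _, hp, _ => by simp at hp
  | _ + 1, t :: ts, p, x, hp, hx => by
    rw [labels_cons, List.mem_append]
    rw [nodes_cons, List.mem_append] at hp
    rcases hp with hp | hp
    · left
      rw [nodes_singleton, List.mem_cons, List.mem_map] at hp
      rw [labels_singleton, List.mem_cons]
      obtain rfl | ⟨q, hq, rfl⟩ := hp
      · simp at hx
      · rw [List.mem_append, List.mem_singleton] at hx
        exact hx.elim (fun hx => .inr (mem_labels_of_mem_ancestors hq hx)) .inl
    · exact .inr (mem_labels_of_mem_ancestors hp hx)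

theorem mem_labels_of_mem_nodes {ts : List (HTree α h)} {p : α × List α} {x : α}
    (hp : p ∈ nodes ts) (hx : x ∈ p.1 :: p.2) : x ∈ labels ts := by
  rcases List.mem_cons.mp hx with rfl | hx
  exacts [List.mem_map_of_mem hp, mem_labels_of_mem_ancestors hp hx]

theorem eq_of_mem_nodes {ts : List (HTree α h)} (hts : (labels ts).Nodup) {a : α}
    {P P' : List α} (hP : (a, P) ∈ nodes ts) (hP' : (a, P') ∈ nodes ts) : P = P' :=
  congrArg Prod.snd (List.inj_on_of_nodup_map hts hP hP' rfl)

theorem nonempty_of_sublistForall₂_embeds {r : α → β → Prop} :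
    ∀ {h} {ts : List (HTree α h)} {us : List (HTree β h)} {a : α},
      List.SublistForall₂ (Embeds r) ts us → a ∈ labels ts → Nonempty β
  | 0, _, _, _, _, ha => by simp [labels, nodes] at ha
  | _ + 1, _, _, _, .nil, ha => by simp [labels] at ha
  | _ + 1, _, u :: _, _, .cons _ _, _ => ⟨u.1⟩
  | _ + 1, _, u :: _, _, .cons_right _, _ => ⟨u.1⟩

def NodeMap (r : α → β → Prop) (σ : α → β) (N : List (α × List α)) (M : List (β × List β)) :
    Prop :=
  (∀ p ∈ N, r p.1 (σ p.1)) ∧ (N.map fun p => (σ p.1, p.2.map σ)).Sublist M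

namespace NodeMap
variable {r : α → β → Prop} {σ σ' : α → β} {N N' : List (α × List α)} {M M' : List (β × List β)}

theorem congr (hσ : ∀ p ∈ N, ∀ x ∈ p.1 :: p.2, σ x = σ' x) (hN : NodeMap r σ N M) :
    NodeMap r σ' N M := by
  have hmap : N.map (fun p => (σ' p.1, p.2.map σ')) = N.map (fun p => (σ p.1, p.2.map σ)) :=
    List.map_congr_left fun p hp => by
      rw [hσ p hp p.1 List.mem_cons_self,
        List.map_congr_left fun x hx => hσ p hp x (List.mem_cons_of_mem _ hx)]
  exact ⟨fun p hp => hσ p hp p.1 List.mem_cons_self ▸ hN.1 p hp, hmap ▸ hN.2⟩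

theorem append (hN : NodeMap r σ N M) (hN' : NodeMap r σ N' M') :
    NodeMap r σ (N ++ N') (M ++ M') := by
  refine ⟨fun p hp => ?_, ?_⟩
  · rcases List.mem_append.mp hp with hp | hp
    exacts [hN.1 p hp, hN'.1 p hp]
  · rw [List.map_append]
    exact hN.2.append hN'.2

end NodeMap

theorem nodeMap_singleton [DecidableEq α] {r : α → β → Prop} {σ : α → β} {t : HTree α (h + 1)}
    {u : HTree β (h + 1)} (hroot : r t.1 u.1) (hfresh : t.1 ∉ labels t.2)
    (hσ : NodeMap r σ (nodes t.2) (nodes u.2)) :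
    NodeMap r (Function.update σ t.1 u.1) (nodes [t]) (nodes [u]) := by
  have hσ' := hσ.congr (σ' := Function.update σ t.1 u.1) fun p hp x hx =>
    (Function.update_of_ne (by rintro rfl; exact hfresh (mem_labels_of_mem_nodes hp hx)) _ _).symm
  rw [nodes_singleton, nodes_singleton]
  refine ⟨?_, ?_⟩
  · simp only [List.mem_cons, List.mem_map, forall_eq_or_imp, Function.update_self,
      forall_exists_index, and_imp]
    refine ⟨hroot, ?_⟩
    rintro _ p hp rfl
    exact hσ'.1 p hp
  · simp only [List.map_cons, Function.update_self, List.map_nil, List.map_map]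
    convert (hσ'.2.map fun q => (q.1, q.2 ++ [u.1])).cons_cons (u.1, []) using 2
    simp [Function.comp_def]

theorem exists_nodeMap_of_sublistForall₂ [Nonempty β] [DecidableEq α] {r : α → β → Prop} :
    ∀ {h} {ts : List (HTree α h)} {us : List (HTree β h)}, (labels ts).Nodup →
      List.SublistForall₂ (Embeds r) ts us → ∃ σ, NodeMap r σ (nodes ts) (nodes us)
  | 0, _, _, _, _ => ⟨Classical.arbitrary _, by simp [nodes, NodeMap]⟩
  | _ + 1, _, _, hnd, hemb => by
    induction hemb with
    | nil => exact ⟨Classical.arbitrary _, by simp [NodeMap]⟩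
    | @cons t u ts us htu _ ih =>
      rw [labels_cons, List.nodup_append] at hnd
      obtain ⟨hnd₁, hnd₂, hdisj⟩ := hnd
      rw [labels_singleton, List.nodup_cons] at hnd₁
      obtain ⟨hfresh, hnd₁⟩ := hnd₁
      obtain ⟨σ₁, h₁⟩ := exists_nodeMap_of_sublistForall₂ hnd₁ htu.2
      obtain ⟨σ₂, h₂⟩ := ih hnd₂
      -- the labels of `t` and of `ts` are disjoint, so the two maps glue
      refine ⟨fun x => if x ∈ labels [t] then Function.update σ₁ t.1 u.1 x else σ₂ x, ?_⟩
      rw [nodes_cons t ts, nodes_cons u us]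
      refine ((nodeMap_singleton htu.1 hfresh h₁).congr ?_).append (h₂.congr ?_)
      · intro p hp x hx
        rw [if_pos (mem_labels_of_mem_nodes hp hx)]
      · intro p hp x hx
        rw [if_neg fun hxt => hdisj _ hxt _ (mem_labels_of_mem_nodes hp hx) rfl]
    | cons_right _ ih =>
      obtain ⟨σ, hσ⟩ := ih hnd
      exact ⟨σ, hσ.1, hσ.2.trans (by rw [nodes_cons]; exact List.sublist_append_right _ _)⟩

end HTree

namespace SimpleGraph
variable {V : Type*} (G : SimpleGraph V)

def ReachableIn (S : Finset V) (u v : V) : Prop :=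
  ∃ p : G.Walk u v, ∀ x ∈ p.support, x ∈ S

def PathsFromLT (S : Finset V) (r : V) (h : ℕ) : Prop :=
  ∀ ⦃w⦄ (p : G.Walk r w), p.IsPath → (∀ x ∈ p.support, x ∈ S) → p.length < h

variable {G} {S T : Finset V} {u v w r : V} {h : ℕ}

namespace ReachableIn

theorem left_mem (huv : G.ReachableIn S u v) : u ∈ S :=
  huv.elim fun p hp => hp u p.start_mem_support

theorem trans (huv : G.ReachableIn S u v) (hvw : G.ReachableIn S v w) : G.ReachableIn S u w := by
  obtain ⟨p, hp⟩ := huv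
  obtain ⟨q, hq⟩ := hvw
  refine ⟨p.append q, fun x hx => ?_⟩
  rw [Walk.mem_support_append_iff] at hx
  exact hx.elim (hp x) (hq x)

theorem refl (hu : u ∈ S) : G.ReachableIn S u u :=
  ⟨.nil, by simpa using hu⟩

theorem of_adj (huv : G.Adj u v) (hu : u ∈ S) (hv : v ∈ S) : G.ReachableIn S u v :=
  ⟨huv.toWalk, by simp [hu, hv]⟩

theorem of_mem_support [DecidableEq V] (p : G.Walk u v) (hp : ∀ x ∈ p.support, x ∈ S)
    (hx : w ∈ p.support) : G.ReachableIn S u w ∧ G.ReachableIn S w v :=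
  ⟨⟨p.takeUntil w hx, fun y hy => hp y (p.support_takeUntil_subset_support hx hy)⟩,
    ⟨p.dropUntil w hx, fun y hy => hp y (p.support_dropUntil_subset_support hx hy)⟩⟩

end ReachableIn

theorem PathsFromLT.mono (hr : G.PathsFromLT T r h) (hST : S ⊆ T) : G.PathsFromLT S r h :=
  fun _ p hp hpS => hr p hp fun x hx => hST (hpS x hx)

/-- The new root is the second vertex of a path from `r` to `v`; its paths extend by `r`. -/
theorem ReachableIn.exists_root_erase [DecidableEq V] (hv : G.ReachableIn S r v) (hvr : v ≠ r)
    (hr : G.PathsFromLT S r (h + 1)) :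
    ∃ r', G.ReachableIn (S.erase r) r' v ∧ G.PathsFromLT (S.erase r) r' h := by
  have hrS := hv.left_mem
  obtain ⟨p, hpS⟩ := hv
  have hq : p.bypass.IsPath := p.bypass_isPath
  have hqS : ∀ x ∈ p.bypass.support, x ∈ S := fun x hx => hpS x (p.support_bypass_subset_support hx)
  generalize p.bypass = q at hq hqS
  cases q with
  | nil => exact absurd rfl hvr
  | @cons _ r' _ hadj q =>
    rw [Walk.cons_isPath_iff] at hq
    have hq' : ∀ x ∈ q.support, x ∈ S.erase r := fun x hx =>
      Finset.mem_erase.mpr ⟨fun hxr => hq.2 (hxr ▸ hx), hqS x (List.mem_cons_of_mem _ hx)⟩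
    refine ⟨r', ⟨q, hq'⟩, fun w p' hp' hp'S => ?_⟩
    have hr' : r ∉ p'.support := fun hrp => by simpa using hp'S r hrp
    have := hr (p'.cons hadj) (hp'.cons hr') fun x hx => ?_
    · simpa using this
    · rcases List.mem_cons.mp hx with rfl | hx
      exacts [hrS, Finset.mem_of_mem_erase (hp'S x hx)]

section Component
variable [DecidableEq V] [DecidablePred (G.ReachableIn S r)]

theorem ReachableIn.filter (hv : G.ReachableIn S r v) :
    G.ReachableIn (S.filter (G.ReachableIn S r)) r v :=
  hv.elim fun p hp => ⟨p, fun x hx =>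
    Finset.mem_filter.mpr ⟨hp x hx, (ReachableIn.of_mem_support p hp hx).1⟩⟩

theorem ReachableIn.sdiff_filter (huv : G.ReachableIn S u v) (hv : ¬G.ReachableIn S r v) :
    G.ReachableIn (S \ S.filter (G.ReachableIn S r)) u v :=
  huv.elim fun p hp => ⟨p, fun x hx => Finset.mem_sdiff.mpr ⟨hp x hx, fun hxC =>
    hv ((Finset.mem_filter.mp hxC).2.trans (ReachableIn.of_mem_support p hp hx).2)⟩⟩

theorem not_adj_filter_sdiff (hv : v ∈ S.filter (G.ReachableIn S r))
    (hw : w ∈ S \ S.filter (G.ReachableIn S r)) : ¬G.Adj v w := fun hvw => by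
  rw [Finset.mem_filter] at hv
  rw [Finset.mem_sdiff, Finset.mem_filter] at hw
  exact hw.2 ⟨hw.1, hv.2.trans (.of_adj hvw hv.1 hw.1)⟩

end Component

open HTree

structure IsEliminationForestOn (G : SimpleGraph V) (S : Finset V) (ts : List (HTree V h)) :
    Prop where
  nodup : (labels ts).Nodup
  mem_labels : ∀ v, v ∈ labels ts ↔ v ∈ S
  adj : ∀ p ∈ nodes ts, ∀ q ∈ nodes ts, G.Adj p.1 q.1 → p.1 ∈ q.2 ∨ q.1 ∈ p.2

namespace IsEliminationForestOn

theorem nil : G.IsEliminationForestOn ∅ ([] : List (HTree V h)) :=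
  ⟨by simp [labels], by simp [labels], by simp⟩

theorem exists_mem_nodes {ts : List (HTree V h)} (hts : G.IsEliminationForestOn S ts)
    (hv : v ∈ S) : ∃ P, (v, P) ∈ nodes ts := by
  obtain ⟨p, hp, rfl⟩ := List.mem_map.mp ((hts.mem_labels v).mpr hv)
  exact ⟨p.2, hp⟩

theorem append [DecidableEq V] {ts us : List (HTree V h)} (hts : G.IsEliminationForestOn S ts)
    (hus : G.IsEliminationForestOn T us) (hST : Disjoint S T)
    (hsep : ∀ v ∈ S, ∀ w ∈ T, ¬G.Adj v w) : G.IsEliminationForestOn (S ∪ T) (ts ++ us) := by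
  have hS {p} (hp : p ∈ nodes ts) : p.1 ∈ S :=
    (hts.mem_labels _).mp (mem_labels_of_mem_nodes hp List.mem_cons_self)
  have hT {p} (hp : p ∈ nodes us) : p.1 ∈ T :=
    (hus.mem_labels _).mp (mem_labels_of_mem_nodes hp List.mem_cons_self)
  refine ⟨?_, fun v => ?_, fun p hp q hq hpq => ?_⟩
  · rw [labels_append, List.nodup_append]
    refine ⟨hts.nodup, hus.nodup, fun a ha b hb hab => ?_⟩
    exact Finset.disjoint_left.mp hST ((hts.mem_labels a).mp ha) (hab ▸ (hus.mem_labels b).mp hb)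
  · rw [labels_append, List.mem_append, hts.mem_labels, hus.mem_labels, Finset.mem_union]
  · rw [nodes_append, List.mem_append] at hp hq
    rcases hp with hp | hp <;> rcases hq with hq | hq
    · exact hts.adj p hp q hq hpq
    · exact absurd hpq (hsep _ (hS hp) _ (hT hq))
    · exact absurd hpq.symm (hsep _ (hS hq) _ (hT hp))
    · exact hus.adj p hp q hq hpq

theorem singleton [DecidableEq V] {t : HTree V (h + 1)} (ht : G.IsEliminationForestOn S t.2)
    (hr : t.1 ∉ S) : G.IsEliminationForestOn (insert t.1 S) [t] := by
  refine ⟨?_, fun v => ?_, fun p hp q hq hpq => ?_⟩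
  · rw [labels_singleton, List.nodup_cons, ht.mem_labels]
    exact ⟨hr, ht.nodup⟩
  · rw [labels_singleton, List.mem_cons, ht.mem_labels, Finset.mem_insert]
  · rw [nodes_singleton, List.mem_cons, List.mem_map] at hp hq
    rcases hp with rfl | ⟨p, hp, rfl⟩ <;> rcases hq with rfl | ⟨q, hq, rfl⟩
    · exact absurd hpq G.irrefl
    · simp
    · simp
    · simpa using (ht.adj p hp q hq hpq).imp .inl .inl

end IsEliminationForestOn

theorem exists_isEliminationForestOn_singleton [DecidableEq V]
    (hforest : ∀ S : Finset V, (∀ v ∈ S, ∃ r, G.ReachableIn S r v ∧ G.PathsFromLT S r h) →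
      ∃ ts : List (HTree V h), G.IsEliminationForestOn S ts)
    (hrS : r ∈ S) (hS : ∀ v ∈ S, G.ReachableIn S r v) (hr : G.PathsFromLT S r (h + 1)) :
    ∃ t : HTree V (h + 1), G.IsEliminationForestOn S [t] := by
  obtain ⟨cs, hcs⟩ := hforest (S.erase r) fun v hv =>
    (hS v (Finset.mem_of_mem_erase hv)).exists_root_erase (Finset.ne_of_mem_erase hv) hr
  refine ⟨(r, cs), ?_⟩
  simpa [Finset.insert_erase hrS] using hcs.singleton (t := (r, cs)) (Finset.notMem_erase r S)

theorem exists_isEliminationForestOn [DecidableEq V] : ∀ (h : ℕ) (S : Finset V),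
    (∀ v ∈ S, ∃ r, G.ReachableIn S r v ∧ G.PathsFromLT S r h) →
      ∃ ts : List (HTree V h), G.IsEliminationForestOn S ts
  | 0, S, hS => by
    obtain rfl : S = ∅ := Finset.eq_empty_of_forall_notMem fun v hv => by
      obtain ⟨r, hrv, hr⟩ := hS v hv
      exact (hr .nil .nil (by simpa using hrv.left_mem)).false
    exact ⟨[], .nil⟩
  | h + 1, S, hS => by
    classical
    induction S using Finset.strongInduction with
    | H S ih =>
    rcases S.eq_empty_or_nonempty with rfl | ⟨v₀, hv₀⟩
    · exact ⟨[], .nil⟩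
    obtain ⟨r, hrv, hr⟩ := hS v₀ hv₀
    set C := S.filter (G.ReachableIn S r)
    have hrC : r ∈ C := Finset.mem_filter.mpr ⟨hrv.left_mem, .refl hrv.left_mem⟩
    obtain ⟨t, ht⟩ := exists_isEliminationForestOn_singleton (exists_isEliminationForestOn h)
      hrC (fun v hv => (Finset.mem_filter.mp hv).2.filter) (hr.mono (Finset.filter_subset _ _))
    obtain ⟨ts, hts⟩ := ih (S \ C) (Finset.sdiff_ssubset (Finset.filter_subset _ _) ⟨r, hrC⟩)
      fun v hv => by
        obtain ⟨hvS, hvC⟩ := Finset.mem_sdiff.mp hv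
        obtain ⟨r', hr'v, hr'⟩ := hS v hvS
        exact ⟨r', hr'v.sdiff_filter fun hrv => hvC (Finset.mem_filter.mpr ⟨hvS, hrv⟩),
          hr'.mono Finset.sdiff_subset⟩
    refine ⟨t :: ts, ?_⟩
    have := ht.append hts Finset.disjoint_sdiff fun v hv w hw => not_adj_filter_sdiff hv hw
    rwa [Finset.union_sdiff_of_subset (Finset.filter_subset _ _)] at this

theorem Walk.IsPath.length_add_one_lt {k : ℕ} (hG : ¬ContainsSubgraph (pathGraph k) G)
    {p : G.Walk u v} (hp : p.IsPath) : p.length + 1 < k := by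
  by_contra! hk
  refine hG ⟨fun i => p.getVert i, fun i j hij => Fin.ext ?_, fun i j hij => ?_⟩
  · exact hp.getVert_injOn (show (i : ℕ) ≤ p.length by omega)
      (show (j : ℕ) ≤ p.length by omega) hij
  · dsimp only
    rw [pathGraph_adj] at hij
    rcases hij with hij | hij
    · rw [← hij]
      exact p.adj_getVert_succ (by omega)
    · rw [← hij]
      exact (p.adj_getVert_succ (by omega)).symm

theorem IsEliminationForestOn.injective_and_adj_iff [Fintype V] {W : Type*} {H : SimpleGraph W}
    {T : Finset W} {h' : ℕ} {ts : List (HTree V h)} {us : List (HTree W h')}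
    (hts : G.IsEliminationForestOn Finset.univ ts) (hus : H.IsEliminationForestOn T us)
    {σ : V → W} (hσ : ((nodes ts).map fun p => (σ p.1, p.2.map σ)).Sublist (nodes us))
    (hpat : ∀ p ∈ nodes ts, ∀ w ∈ p.2, G.Adj w p.1 ↔ H.Adj (σ w) (σ p.1)) :
    Function.Injective σ ∧ ∀ u v, G.Adj u v ↔ H.Adj (σ u) (σ v) := by
  have hinj : Function.Injective σ := by
    have hnd : ((labels ts).map σ).Nodup := by
      refine hus.nodup.sublist ?_
      simpa [labels, List.map_map, Function.comp_def] using hσ.map Prod.fst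
    exact fun x y hxy => List.inj_on_of_nodup_map hnd ((hts.mem_labels x).mpr (Finset.mem_univ _))
      ((hts.mem_labels y).mpr (Finset.mem_univ _)) hxy
  have hmem {p} (hp : p ∈ nodes ts) : (σ p.1, p.2.map σ) ∈ nodes us :=
    hσ.subset (List.mem_map_of_mem hp)
  have hcomp {p q} (hp : p ∈ nodes ts) (hq : q ∈ nodes ts)
      (hpq : G.Adj p.1 q.1 ∨ H.Adj (σ p.1) (σ q.1)) : p.1 ∈ q.2 ∨ q.1 ∈ p.2 := by
    rcases hpq with hpq | hpq
    · exact hts.adj p hp q hq hpq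
    · simpa [List.mem_map, hinj.eq_iff] using hus.adj _ (hmem hp) _ (hmem hq) hpq
  refine ⟨hinj, fun u v => ?_⟩
  obtain ⟨P, hP⟩ := hts.exists_mem_nodes (Finset.mem_univ u)
  obtain ⟨Q, hQ⟩ := hts.exists_mem_nodes (Finset.mem_univ v)
  have key : u ∈ Q ∨ v ∈ P → (G.Adj u v ↔ H.Adj (σ u) (σ v)) := by
    rintro (hu | hv)
    · exact hpat _ hQ u hu
    · rw [G.adj_comm, H.adj_comm]
      exact hpat _ hP v hv
  exact ⟨fun huv => (key (hcomp hP hQ (.inl huv))).mp huv,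
    fun huv => (key (hcomp hP hQ (.inr huv))).mpr huv⟩

section Labels
variable {Q X : Type*} [Preorder Q]

def LabelLE (x y : Q × X) : Prop := x.1 ≤ y.1 ∧ x.2 = y.2

instance : IsPreorder (Q × X) LabelLE where
  refl _ := ⟨le_rfl, rfl⟩
  trans _ _ _ hxy hyz := ⟨hxy.1.trans hyz.1, hxy.2.trans hyz.2⟩

theorem wellQuasiOrdered_labelLE [Finite X] (hQ : WellQuasiOrdered (α := Q) (· ≤ ·)) :
    WellQuasiOrdered (LabelLE (Q := Q) (X := X)) :=
  hQ.prod (Finite.wellQuasiOrdered _)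

/-- Padding the adjacency pattern of `v` towards its ancestors `P` to length `k` keeps the label
type finite. -/
def vertexLabel (G : SimpleGraph V) (f : V → Q) (k : ℕ) (v : V) (P : List V) :
    Q × (Fin k → Option Prop) :=
  (f v, fun i => (P.map (G.Adj · v))[(i : ℕ)]?)

end Labels

theorem exists_induced_embedding_of_embeds {V W Q : Type*} [Fintype V] [Fintype W] [Preorder Q]
    {G : SimpleGraph V} {H : SimpleGraph W} {f : V → Q} {g : W → Q} {k : ℕ}
    {ts : List (HTree V k)} {us : List (HTree W k)}
    (hts : G.IsEliminationForestOn Finset.univ ts) (hus : H.IsEliminationForestOn Finset.univ us)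
    {ancG : V → List V} {ancH : W → List W} (hancG : ∀ v, (v, ancG v) ∈ nodes ts)
    (hancH : ∀ w, (w, ancH w) ∈ nodes us)
    (hemb : List.SublistForall₂
      (Embeds fun v w => LabelLE (vertexLabel G f k v (ancG v)) (vertexLabel H g k w (ancH w)))
      ts us) :
    ∃ σ : V → W, Function.Injective σ ∧ (∀ u v, G.Adj u v ↔ H.Adj (σ u) (σ v)) ∧
      ∀ v, f v ≤ g (σ v) := by
  classical
  rcases isEmpty_or_nonempty V with hV | ⟨⟨v₀⟩⟩
  · exact ⟨isEmptyElim, fun v => isEmptyElim v, fun v => isEmptyElim v, fun v => isEmptyElim v⟩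
  -- a default value in `W` for the vertex map
  have := nonempty_of_sublistForall₂_embeds hemb ((hts.mem_labels v₀).mpr (Finset.mem_univ _))
  obtain ⟨σ, hrel, hσ⟩ := exists_nodeMap_of_sublistForall₂ hts.nodup hemb
  have hanc (v : V) : ancH (σ v) = (ancG v).map σ :=
    eq_of_mem_nodes hus.nodup (hancH _) (hσ.subset (List.mem_map_of_mem (hancG v)))
  have hlabel (v : V) :
      f v ≤ g (σ v) ∧ ∀ w ∈ ancG v, G.Adj w v ↔ H.Adj (σ w) (σ v) := by
    obtain ⟨hfg, hpat⟩ := hrel _ (hancG v)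
    simp only [vertexLabel, hanc, List.map_map] at hfg hpat
    have hlen := (length_lt_of_mem_nodes (hancG v)).le
    have := List.eq_of_getElem?_eq_of_length_le (by simpa using hlen) (by simpa using hlen)
      (congrFun hpat)
    exact ⟨hfg, fun w hw => iff_of_eq (List.map_inj_left.mp this w hw)⟩
  obtain ⟨hinj, hadj⟩ := hts.injective_and_adj_iff hus hσ fun p hp w hw => by
    rw [eq_of_mem_nodes hts.nodup hp (hancG p.1)] at hw
    exact (hlabel p.1).2 w hw
  exact ⟨σ, hinj, hadj, fun v => (hlabel v).1⟩

end SimpleGraph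

theorem labeled_path_free_graphs_wqo_general
    (k : ℕ) (Q : Type) [Preorder Q]
    (hwqo : ∀ q : ℕ → Q, ∃ i j : ℕ, i < j ∧ q i ≤ q j)
    (V : ℕ → Type) [∀ n, Fintype (V n)] (G : ∀ n, SimpleGraph (V n))
    (hfree : ∀ n, ¬ ContainsSubgraph (pathGraph k) (G n))
    (f : ∀ n, V n → Q) :
    ∃ i j : ℕ, i < j ∧ ∃ σ : V i → V j, Function.Injective σ ∧
      (∀ u v, (G i).Adj u v ↔ (G j).Adj (σ u) (σ v)) ∧
      ∀ v, f i v ≤ f j (σ v) := by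
  classical
  have hforest (n : ℕ) :
      ∃ ts : List (HTree (V n) k), (G n).IsEliminationForestOn Finset.univ ts :=
    (G n).exists_isEliminationForestOn k _ fun v _ => ⟨v, .refl (Finset.mem_univ v),
      fun _ _ hp _ => Nat.lt_of_succ_lt (hp.length_add_one_lt (hfree n))⟩
  choose ts hts using hforest
  choose anc hanc using fun n v => (hts n).exists_mem_nodes (Finset.mem_univ v)
  obtain ⟨i, j, hij, hemb⟩ :=
    (HTree.wellQuasiOrdered_embeds (wellQuasiOrdered_labelLE hwqo) k).sublistForall₂
      fun n => (ts n).map (HTree.map fun v => vertexLabel (G n) (f n) k v (anc n v))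
  simp only [List.sublistForall₂_map_left_iff, List.sublistForall₂_map_right_iff,
    HTree.embeds_map_iff] at hemb
  exact ⟨i, j, hij, exists_induced_embedding_of_embeds (hts i) (hts j) (hanc i) (hanc j) hemb⟩

theorem labeled_path_free_graphs_wqo
    (k : ℕ) (hk : 1 ≤ k) (Q : Type) [Preorder Q]
    (hwqo : ∀ q : ℕ → Q, ∃ i j : ℕ, i < j ∧ q i ≤ q j)
    (V : ℕ → Type) [∀ n, Fintype (V n)] (G : ∀ n, SimpleGraph (V n))
    (hfree : ∀ n, ¬ ContainsSubgraph (pathGraph k) (G n))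
    (f : ∀ n, V n → Q) :
    ∃ i j : ℕ, i < j ∧ ∃ σ : V i → V j, Function.Injective σ ∧
      (∀ u v, (G i).Adj u v ↔ (G j).Adj (σ u) (σ v)) ∧
      ∀ v, f i v ≤ f j (σ v) :=
  labeled_path_free_graphs_wqo_general k Q hwqo V G hfree f
end

section
/- For all integers s ≥ 1, t ≥ 1 and q ≥ 1 there exists a natural number z = Z(s, t, q) such that every finite simple graph containing a path on z vertices as a subgraph contains the complete graph K_t, or the complete bipartite graph K_{q,q}, or the path P_s as an induced subgraph. -/
/-!
Compactness reduces the statement to a graph `H` on `ℕ` containing the ray `i ~ i + 1`: if for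
every `z` some graph with a `z`-vertex path avoided all three patterns, the ultralimit of these
graphs, read along their paths, would be such an `H`, and every finite induced subgraph of `H`
reappears in one of them.

Suppose `H` has no induced `P_s`. A shortest walk is an induced path, so vertices joined by a
walk inside a set `S` are joined inside `S` by a walk of length at most `s - 2`; in particular
`a < b` are joined by such a walk inside `[a, b]`. Infinite Ramsey for 4-tuples gives
`A₀ < A₁ < ⋯` such that the adjacency pattern between the walks in `[A_i, A_{i+1}]` and in
`[A_j, A_{j+1}]`, `i + 1 < j`, does not depend on `i, j`. A nonempty pattern yields `K_t` or
`K_{q,q}` among the vertices at fixed positions of every other walk. An empty one means that far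
walks do not interact, so within the union of the walks the distance from `A₀` to `A_n` grows
with `n`; a shortest walk there is an induced path on more than `s` vertices.
-/

open SimpleGraph

/-- `H` occurs as an induced subgraph of `G`. -/
def ContainsInduced {W V : Type*} (H : SimpleGraph W) (G : SimpleGraph V) : Prop :=
  Nonempty (H ↪g G)

open Filter

theorem exists_strictMono_forall_strictMono_eq {C : Type*} [Finite C] :
    ∀ (r : ℕ) (f : (Fin r → ℕ) → C), ∃ g : ℕ → ℕ, StrictMono g ∧
      ∃ c, ∀ t : Fin r → ℕ, StrictMono t → f (g ∘ t) = c
  | 0, f => ⟨id, strictMono_id, f Fin.elim0, fun t _ => congrArg f (Subsingleton.elim _ _)⟩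
  | r + 1, f => by
    have step (e : ℕ → ℕ) : ∃ φ : ℕ → ℕ, StrictMono φ ∧
        ∃ c, ∀ t : Fin r → ℕ, StrictMono t → f (Fin.cons (e 0) fun i => e (φ (t i) + 1)) = c :=
      exists_strictMono_forall_strictMono_eq r fun t => f (Fin.cons (e 0) fun i => e (t i + 1))
    choose φ hφ c hc using step
    -- `E (k + 1)` is a subsequence of `E k` minus its first term `x k` on which the colour of
    -- `(x k, …)` is constant, equal to `c (E k)`.
    let E : ℕ → ℕ → ℕ := fun k => Nat.rec id (fun _ e n => e (φ e n + 1)) k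
    let x : ℕ → ℕ := fun k => E k 0
    have hE : ∀ k, StrictMono (E k) := by
      intro k
      induction k with
      | zero => exact strictMono_id
      | succ k ih => exact fun a b hab => ih (Nat.succ_lt_succ (hφ _ hab))
    have hsub : ∀ k d, ∃ ψ : ℕ → ℕ, E (k + 1 + d) = E (k + 1) ∘ ψ := by
      intro k d
      induction d with
      | zero => exact ⟨id, rfl⟩
      | succ d ih =>
        obtain ⟨ψ, hψ⟩ := ih
        exact ⟨fun n => ψ (φ (E (k + 1 + d)) n + 1), funext fun n => congrFun hψ _⟩
    have hx : StrictMono x := strictMono_nat_of_lt_succ fun k =>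
      hE k (Nat.succ_pos (φ (E k) 0))
    obtain ⟨c₀, hc₀⟩ := Finite.exists_infinite_fiber fun k => c (E k)
    obtain ⟨κ, hκ, hκc⟩ := extraction_of_frequently_atTop
      (Nat.frequently_atTop_iff_infinite.mpr (Set.infinite_coe_iff.mp hc₀))
    refine ⟨x ∘ κ, hx.comp hκ, c₀, fun t ht => ?_⟩
    set k := κ (t 0)
    have hmem : ∀ i : Fin r, ∃ n, E (k + 1) n = x (κ (t i.succ)) := by
      intro i
      obtain ⟨ψ, hψ⟩ := hsub k (κ (t i.succ) - (k + 1))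
      have hlt : k < κ (t i.succ) := hκ (ht (Fin.succ_pos i))
      refine ⟨ψ 0, ?_⟩
      rw [← Function.comp_apply (f := E (k + 1)), ← hψ, Nat.add_sub_cancel' hlt]
    choose w hw using hmem
    have hw_mono : StrictMono w := fun i j hij => (hE (k + 1)).lt_iff_lt.mp <| by
      rw [hw, hw]; exact hx (hκ (ht (Fin.succ_lt_succ_iff.mpr hij)))
    calc f (x ∘ κ ∘ t)
        = f (Fin.cons (E k 0) fun i => E k (φ (E k) (w i) + 1)) := by
          rw [← Fin.cons_self_tail (x ∘ κ ∘ t)]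
          congr 2
          exact funext fun i => (hw i).symm
      _ = c (E k) := hc _ w hw_mono
      _ = c₀ := hκc (t 0)

section Embeddings

variable {V α : Type*} {G : SimpleGraph V}

theorem ContainsInduced.of_induce {W : SimpleGraph α} {S : Set V}
    (h : ContainsInduced W (G.induce S)) : ContainsInduced W G :=
  h.map fun e => (Embedding.induce S).comp e

theorem containsInduced_completeGraph_of_adj {t : ℕ} (f : ℕ → V)
    (hf : ∀ i j, i < j → G.Adj (f i) (f j)) : ContainsInduced (completeGraph (Fin t)) G := by
  have hadj : ∀ i j, i ≠ j → G.Adj (f i) (f j) := fun i j hij =>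
    hij.lt_or_gt.elim (hf i j) fun h => (hf j i h).symm
  refine ⟨⟨⟨fun i => f i, fun i j h => Fin.ext ?_⟩, fun {i j} => ?_⟩⟩
  · by_contra hij
    exact (hadj _ _ hij).ne h
  · simp only [top_adj, ne_eq, ← Fin.val_ne_iff]
    exact ⟨fun h hij => (h.ne (congrArg f hij)), hadj i j⟩

theorem containsInduced_completeBipartiteGraph_of_adj {q : ℕ} (u w : Fin q → V)
    (hu : ∀ i j, i < j → ¬G.Adj (u i) (u j)) (hw : ∀ i j, i < j → ¬G.Adj (w i) (w j))
    (huw : ∀ i j, G.Adj (u i) (w j)) (hu_inj : u.Injective) (hw_inj : w.Injective) :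
    ContainsInduced (completeBipartiteGraph (Fin q) (Fin q)) G := by
  have symm_of_lt {f : Fin q → V} (hf : ∀ i j, i < j → ¬G.Adj (f i) (f j)) (i j : Fin q) :
      ¬G.Adj (f i) (f j) := by
    rcases lt_trichotomy i j with h | rfl | h
    exacts [hf i j h, G.irrefl, fun h' => hf j i h h'.symm]
  refine ⟨⟨⟨Sum.elim u w, ?_⟩, ?_⟩⟩
  · rintro (i | i) (j | j) h <;> simp only [Sum.elim_inl, Sum.elim_inr] at h
    · exact congrArg Sum.inl (hu_inj h)
    · exact ((huw i j).ne h).elim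
    · exact ((huw j i).ne h.symm).elim
    · exact congrArg Sum.inr (hw_inj h)
  · rintro (i | i) (j | j)
    · exact iff_of_false (symm_of_lt hu i j) (by simp)
    · exact iff_of_true (huw i j) (by simp)
    · exact iff_of_true (huw j i).symm (by simp)
    · exact iff_of_false (symm_of_lt hw i j) (by simp)

theorem containsInduced_completeGraph_or_completeBipartiteGraph {t q : ℕ} (u w : ℕ → V)
    (hu_inj : u.Injective) (hw_inj : w.Injective) (huw : ∀ i j, i < j → G.Adj (u i) (w j))
    (hu : (∀ i j, i < j → G.Adj (u i) (u j)) ∨ ∀ i j, i < j → ¬G.Adj (u i) (u j))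
    (hw : (∀ i j, i < j → G.Adj (w i) (w j)) ∨ ∀ i j, i < j → ¬G.Adj (w i) (w j)) :
    ContainsInduced (completeGraph (Fin t)) G ∨
      ContainsInduced (completeBipartiteGraph (Fin q) (Fin q)) G := by
  rcases hu with hu | hu
  · exact .inl (containsInduced_completeGraph_of_adj u hu)
  rcases hw with hw | hw
  · exact .inl (containsInduced_completeGraph_of_adj w hw)
  refine .inr (containsInduced_completeBipartiteGraph_of_adj (fun i => u i) (fun j => w (q + j))
    (fun i j h => hu i j h) (fun i j h => hw _ _ (by simpa using h))
    (fun i j => huw _ _ (by omega)) (hu_inj.comp Fin.val_injective)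
    (hw_inj.comp ((add_right_injective q).comp Fin.val_injective)))

end Embeddings

namespace SimpleGraph.Walk

variable {V : Type*} {G : SimpleGraph V} {u v : V}

theorem adj_getVert_iff_of_length_eq_dist (p : G.Walk u v) (hp : p.length = G.dist u v)
    {i j : ℕ} (hij : i ≤ j) (hj : j ≤ p.length) :
    G.Adj (p.getVert i) (p.getVert j) ↔ j = i + 1 := by
  refine ⟨fun h => ?_, fun h => h ▸ p.adj_getVert_succ (by omega)⟩
  by_contra hne
  have hi : i ≠ j := fun hij => G.irrefl (hij ▸ h)
  -- a chord would shortcut the geodesic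
  have := G.dist_le ((p.take i).append (.cons h (p.drop j)))
  simp only [length_append, take_length, length_cons, drop_length] at this
  omega

theorem le_add_length {φ : V → ℕ} (hφ : ∀ x y, G.Adj x y → φ y ≤ φ x + 1)
    (p : G.Walk u v) : φ v ≤ φ u + p.length := by
  induction p with
  | nil => exact le_rfl
  | cons h p ih =>
    have := hφ _ _ h
    rw [length_cons]
    omega

end SimpleGraph.Walk

section InducedPaths

variable {V : Type*} {G : SimpleGraph V}

theorem containsInduced_pathGraph_of_length_eq_dist {u v : V} (p : G.Walk u v)
    (hp : p.length = G.dist u v) {n : ℕ} (hn : n ≤ p.length + 1) :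
    ContainsInduced (pathGraph n) G := by
  refine ⟨⟨⟨fun i => p.getVert i, fun i j h => Fin.ext ?_⟩, fun {i j} => ?_⟩⟩
  · exact (p.isPath_of_length_eq_dist hp).getVert_injOn (show (i : ℕ) ≤ p.length by omega)
      (show (j : ℕ) ≤ p.length by omega) h
  · change G.Adj (p.getVert i) (p.getVert j) ↔ _
    rw [pathGraph_adj]
    rcases le_total (i : ℕ) j with h | h
    · rw [p.adj_getVert_iff_of_length_eq_dist hp h (by omega)]
      omega
    · rw [G.adj_comm, p.adj_getVert_iff_of_length_eq_dist hp h (by omega)]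
      omega

theorem SimpleGraph.Reachable.exists_walk_length_add_two_le {s : ℕ}
    (hP : ¬ContainsInduced (pathGraph s) G) {u v : V} (h : G.Reachable u v) :
    ∃ p : G.Walk u v, p.length + 2 ≤ s := by
  obtain ⟨p, hp⟩ := h.exists_walk_length_eq_dist
  refine ⟨p, by_contra fun hs => hP ?_⟩
  exact containsInduced_pathGraph_of_length_eq_dist p hp (by omega)

end InducedPaths

section Blocks

variable {V : Type*} {G : SimpleGraph V}

theorem containsInduced_pathGraph_of_blocks (x : ℕ → ℕ → V) (m : ℕ)
    (hchain : ∀ i, x i m = x (i + 1) 0)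
    (hstep : ∀ i k, k < m → x i k = x i (k + 1) ∨ G.Adj (x i k) (x i (k + 1)))
    (hfar : ∀ i j, i + 1 < j → ∀ k ≤ m, ∀ l ≤ m,
      x i k ≠ x j l ∧ ¬G.Adj (x i k) (x j l))
    (s : ℕ) : ContainsInduced (pathGraph s) G := by
  by_contra hP
  let U : Set V := {v | ∃ i, ∃ k ≤ m, x i k = v}
  have hU : ∀ i, ∀ k ≤ m, x i k ∈ U := fun i k hk => ⟨i, k, hk, rfl⟩
  have hreach : ∀ n, (G.induce U).Reachable ⟨x 0 0, hU 0 0 (Nat.zero_le m)⟩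
      ⟨x n 0, hU n 0 (Nat.zero_le m)⟩ := by
    intro n
    induction n with
    | zero => rfl
    | succ n ih =>
      have hblock : ∀ k (hk : k ≤ m), (G.induce U).Reachable ⟨x n 0, hU n 0 (Nat.zero_le m)⟩
          ⟨x n k, hU n k hk⟩ := by
        intro k hk
        induction k with
        | zero => rfl
        | succ k ihk =>
          refine (ihk (by omega)).trans ?_
          rcases hstep n k (by omega) with h | h
          · have : (⟨_, hU n k (by omega)⟩ : U) = ⟨_, hU n (k + 1) hk⟩ := Subtype.ext h
            exact this ▸ .rfl
          · exact Adj.reachable h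
      exact ih.trans ((Subtype.ext (hchain n) : (⟨_, hU n m le_rfl⟩ : U) = ⟨_, _⟩) ▸
        hblock m le_rfl)
  obtain ⟨p, hp⟩ := (hreach (s + 2)).exists_walk_length_add_two_le fun h => hP h.of_induce
  choose φ k hk hφ using fun v : U => v.2
  have hφ_adj : ∀ a b, (G.induce U).Adj a b → φ b ≤ φ a + 1 := fun a b hab => by
    by_contra! h
    exact (hfar _ _ h _ (hk a) _ (hk b)).2 (by rwa [hφ, hφ])
  have hstart : φ ⟨x 0 0, hU 0 0 (Nat.zero_le m)⟩ ≤ 1 := by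
    by_contra! h
    exact (hfar 0 _ h 0 (Nat.zero_le m) _ (hk _)).1 (hφ ⟨x 0 0, _⟩).symm
  have hend : s + 1 ≤ φ ⟨x (s + 2) 0, hU (s + 2) 0 (Nat.zero_le m)⟩ := by
    by_contra! h
    exact (hfar _ (s + 2) (by omega) _ (hk _) 0 (Nat.zero_le m)).1 (hφ ⟨x (s + 2) 0, _⟩)
  have := p.le_add_length hφ_adj
  omega

theorem containsInduced_of_blocks_of_uniform {t q : ℕ} (x : ℕ → ℕ → V) (m : ℕ)
    (hchain : ∀ i, x i m = x (i + 1) 0)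
    (hstep : ∀ i k, k < m → x i k = x i (k + 1) ∨ G.Adj (x i k) (x i (k + 1)))
    (hsep : ∀ i j, i + 1 < j → ∀ k ≤ m, ∀ l ≤ m, x i k ≠ x j l)
    (Q : Set (Fin (m + 1) × Fin (m + 1)))
    (hQ : ∀ i j, i + 1 < j → ∀ k l : Fin (m + 1), G.Adj (x i k) (x j l) ↔ (k, l) ∈ Q)
    (s : ℕ) :
    ContainsInduced (completeGraph (Fin t)) G ∨
      ContainsInduced (completeBipartiteGraph (Fin q) (Fin q)) G ∨
      ContainsInduced (pathGraph s) G := by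
  rcases Q.eq_empty_or_nonempty with rfl | ⟨⟨k, l⟩, hkl⟩
  · refine .inr (.inr (containsInduced_pathGraph_of_blocks x m hchain hstep
      (fun i j hij k hk l hl => ⟨hsep i j hij k hk l hl, ?_⟩) s))
    simpa using hQ i j hij ⟨k, by omega⟩ ⟨l, by omega⟩
  have hinj : ∀ k : Fin (m + 1), Function.Injective fun i => x (2 * i) k := by
    intro k i j h
    by_contra hij
    rcases Nat.lt_or_gt_of_ne hij with hij | hij
    exacts [hsep _ _ (by omega) _ k.is_le _ k.is_le h,
      hsep _ _ (by omega) _ k.is_le _ k.is_le h.symm]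
  have huniform : ∀ k : Fin (m + 1), (∀ i j, i < j → G.Adj (x (2 * i) k) (x (2 * j) k)) ∨
      ∀ i j, i < j → ¬G.Adj (x (2 * i) k) (x (2 * j) k) := fun k =>
    (em ((k, k) ∈ Q)).imp (fun h i j _ => (hQ _ _ (by omega) k k).mpr h)
      (fun h i j _ => (hQ _ _ (by omega) k k).not.mpr h)
  exact (containsInduced_completeGraph_or_completeBipartiteGraph _ _ (hinj k) (hinj l)
    (fun i j _ => (hQ _ _ (by omega) k l).mpr hkl) (huniform k) (huniform l)).imp_right .inl

end Blocks

section Ray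

variable {H : SimpleGraph ℕ}

theorem reachable_induce_Icc (hray : ∀ i, H.Adj i (i + 1)) {a b : ℕ} (hab : a ≤ b) :
    (H.induce (Set.Icc a b)).Reachable ⟨a, le_rfl, hab⟩ ⟨b, hab, le_rfl⟩ := by
  suffices ∀ n (hn : a ≤ n) (hnb : n ≤ b),
      (H.induce (Set.Icc a b)).Reachable ⟨a, le_rfl, hab⟩ ⟨n, hn, hnb⟩ from
    this b hab le_rfl
  intro n hn
  induction n, hn using Nat.le_induction with
  | base => exact fun _ => .rfl
  | succ n hn ih =>
    intro hnb
    have hadj : (H.induce (Set.Icc a b)).Adj ⟨n, hn, by omega⟩ ⟨n + 1, by omega, hnb⟩ :=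
      hray n
    exact (ih (by omega)).trans hadj.reachable

theorem exists_short_walk_in_Icc (hray : ∀ i, H.Adj i (i + 1)) {s : ℕ}
    (hP : ¬ContainsInduced (pathGraph s) H) {a b : ℕ} (hab : a ≤ b) :
    ∃ c : ℕ → ℕ, c 0 = a ∧ c (s - 2) = b ∧ (∀ k, c k ∈ Set.Icc a b) ∧
      ∀ k, c k = c (k + 1) ∨ H.Adj (c k) (c (k + 1)) := by
  obtain ⟨p, hp⟩ := (reachable_induce_Icc hray hab).exists_walk_length_add_two_le
    fun h => hP h.of_induce
  refine ⟨fun k => p.getVert k, by simp, by simp [p.getVert_of_length_le (i := s - 2) (by omega)],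
    fun k => (p.getVert k).2, fun k => ?_⟩
  rcases lt_or_ge k p.length with hk | hk
  · exact .inr (p.adj_getVert_succ hk)
  · simp [p.getVert_of_length_le hk, p.getVert_of_length_le (hk.trans k.le_succ)]

theorem containsInduced_of_forall_adj_succ (hray : ∀ i, H.Adj i (i + 1)) (s t q : ℕ) :
    ContainsInduced (completeGraph (Fin t)) H ∨
      ContainsInduced (completeBipartiteGraph (Fin q) (Fin q)) H ∨
      ContainsInduced (pathGraph s) H := by
  by_cases hP : ContainsInduced (pathGraph s) H
  · exact .inr (.inr hP)
  have hwalk : ∀ a b, ∃ c : ℕ → ℕ, a ≤ b → c 0 = a ∧ c (s - 2) = b ∧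
      (∀ k, c k ∈ Set.Icc a b) ∧ ∀ k, c k = c (k + 1) ∨ H.Adj (c k) (c (k + 1)) := by
    intro a b
    by_cases hab : a ≤ b
    · exact (exists_short_walk_in_Icc hray hP hab).imp fun _ h _ => h
    · exact ⟨id, fun h => (hab h).elim⟩
  choose c hc using hwalk
  obtain ⟨A, hA, Q, hQ⟩ := exists_strictMono_forall_strictMono_eq 4 fun v : Fin 4 → ℕ =>
    {kl : Fin (s - 2 + 1) × Fin (s - 2 + 1) | H.Adj (c (v 0) (v 1) kl.1) (c (v 2) (v 3) kl.2)}
  let x : ℕ → ℕ → ℕ := fun i => c (A i) (A (i + 1))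
  have hx (i : ℕ) := hc (A i) (A (i + 1)) (hA (Nat.lt_succ_self i)).le
  refine containsInduced_of_blocks_of_uniform x (s - 2)
    (fun i => (hx i).2.1.trans (hx (i + 1)).1.symm) (fun i k _ => (hx i).2.2.2 k)
    (fun i j hij k _ l _ => ?_) Q (fun i j hij k l => ?_) s
  · refine Nat.ne_of_lt ?_
    calc x i k ≤ A (i + 1) := ((hx i).2.2.1 k).2
      _ < A j := hA hij
      _ ≤ x j l := ((hx j).2.2.1 l).1
  · have hmono : StrictMono ![i, i + 1, j, j + 1] :=
      Fin.strictMono_iff_lt_succ.mpr fun a => by fin_cases a <;> simp; omega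
    rw [← hQ _ hmono]
    rfl

end Ray

section Ultralimit

variable {V : ℕ → Type*} (G : ∀ z, SimpleGraph (V z)) (σ : ∀ z, Fin z → V z)

noncomputable def ultralimitGraph : SimpleGraph ℕ where
  Adj a b := ∀ᶠ z in (hyperfilter ℕ : Filter ℕ),
    ∃ (ha : a < z) (hb : b < z), (G z).Adj (σ z ⟨a, ha⟩) (σ z ⟨b, hb⟩)
  symm := ⟨fun _ _ h => h.mono fun _ ⟨ha, hb, h⟩ => ⟨hb, ha, h.symm⟩⟩
  loopless := ⟨fun _ h => by
    obtain ⟨z, _, _, h⟩ := h.exists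
    exact (G z).irrefl h⟩

variable {G σ}

theorem ultralimitGraph_adj_succ
    (hσ : ∀ z, ∀ ⦃u v⦄, (pathGraph z).Adj u v → (G z).Adj (σ z u) (σ z v)) (i : ℕ) :
    (ultralimitGraph G σ).Adj i (i + 1) := by
  have hlt : ∀ᶠ z in (hyperfilter ℕ : Filter ℕ), i + 1 < z :=
    hyperfilter_le_cofinite (Nat.cofinite_eq_atTop ▸ eventually_gt_atTop (i + 1))
  exact hlt.mono fun z hz => ⟨by omega, hz, hσ z (by simp [pathGraph_adj])⟩

theorem exists_containsInduced_of_ultralimitGraph (hσ : ∀ z, (σ z).Injective) {α : Type*}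
    [Finite α] {W : SimpleGraph α} (h : ContainsInduced W (ultralimitGraph G σ)) :
    ∃ z, ContainsInduced W (G z) := by
  obtain ⟨e⟩ := h
  have hadj : ∀ a b, ∀ᶠ z in (hyperfilter ℕ : Filter ℕ), W.Adj a b ↔
      ∃ (ha : e a < z) (hb : e b < z), (G z).Adj (σ z ⟨e a, ha⟩) (σ z ⟨e b, hb⟩) := by
    intro a b
    by_cases hab : W.Adj a b
    · exact (e.map_adj_iff.mpr hab).mono fun _ h => iff_of_true hab h
    · exact (Ultrafilter.eventually_not.mpr (e.map_adj_iff.not.mpr hab)).mono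
        fun _ h => iff_of_false hab h
  have hlt : ∀ a, ∀ᶠ z in (hyperfilter ℕ : Filter ℕ), e a < z := fun a =>
    hyperfilter_le_cofinite (Nat.cofinite_eq_atTop ▸ eventually_gt_atTop (e a))
  obtain ⟨z, hz_adj, hz_lt⟩ :=
    ((eventually_all.mpr fun a => eventually_all.mpr (hadj a)).and (eventually_all.mpr hlt)).exists
  refine ⟨z, ⟨⟨⟨fun a => σ z ⟨e a, hz_lt a⟩, fun a b h => ?_⟩, fun {a b} => ?_⟩⟩⟩
  · exact e.injective (Fin.mk.inj_iff.mp (hσ z h))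
  · exact ⟨fun h => (hz_adj a b).mpr ⟨_, _, h⟩, fun h => ((hz_adj a b).mp h).2.2⟩

end Ultralimit

theorem long_path_gives_clique_biclique_or_induced_path_general
    (s t q : ℕ) :
    ∃ z : ℕ, ∀ (V : Type) [Fintype V] (G : SimpleGraph V),
      ContainsSubgraph (pathGraph z) G →
      ContainsInduced (completeGraph (Fin t)) G ∨
      ContainsInduced (completeBipartiteGraph (Fin q) (Fin q)) G ∨
      ContainsInduced (pathGraph s) G := by
  by_contra! h
  choose V _ G hpath hK hB hP using h
  choose σ hσ_inj hσ_adj using hpath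
  rcases containsInduced_of_forall_adj_succ (ultralimitGraph_adj_succ hσ_adj) s t q with h | h | h
  exacts [(exists_containsInduced_of_ultralimitGraph hσ_inj h).elim hK,
    (exists_containsInduced_of_ultralimitGraph hσ_inj h).elim hB,
    (exists_containsInduced_of_ultralimitGraph hσ_inj h).elim hP]

theorem long_path_gives_clique_biclique_or_induced_path
    (s t q : ℕ) (hs : 1 ≤ s) (ht : 1 ≤ t) (hq : 1 ≤ q) :
    ∃ z : ℕ, ∀ (V : Type) [Fintype V] (G : SimpleGraph V),
      ContainsSubgraph (pathGraph z) G →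
      ContainsInduced (completeGraph (Fin t)) G ∨
      ContainsInduced (completeBipartiteGraph (Fin q) (Fin q)) G ∨
      ContainsInduced (pathGraph s) G :=
  long_path_gives_clique_biclique_or_induced_path_general s t q
end

section
/- For every finite simple graph H and all integers k ≥ 1 and t ≥ 1 there exists a natural number l such that every finite simple graph G that is P_k-free and K_{t,t}-free and admits a graph homomorphism to H contains no path on l vertices as a subgraph. -/
open SimpleGraph

/-!
Let `P` be a path on `l` vertices in `G`. For `a < b` the segment `P[a..b]` contains an induced
path from `P a` to `P b`, which has fewer than `k` vertices since `G` is `P_k`-free. Colour each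
4-tuple `a < b < a' < b'` by the adjacency pattern between the induced paths of `[a, b]` and
`[a', b']`; Ramsey's theorem for 4-uniform hypergraphs gives `g 0 < g 1 < ⋯ < g M` on which this
pattern is constant. If the pattern has an edge, the connectors of the intervals `[g r, g (r + 1)]`
with `r` even supply two sets of `|H| (t - 1) + 1` vertices with all edges between them; the colour
classes of a homomorphism to `H` are independent, so by pigeonhole `G` has an induced `K_{t,t}`.
Otherwise the connectors for `r < k` only touch their neighbours, so a shortest path from `P (g 0)`
to `P (g k)` through them has at least `k` vertices, and it is an induced `P_k`.
-/

open Finset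

section Ramsey

variable {α C : Type*} [LinearOrder α] {r : ℕ}

def IsMonochromaticOn (c : (Fin r → α) → C) (B : Finset α) (κ : C) : Prop :=
  ∀ t : Fin r → α, StrictMono t → (∀ i, t i ∈ B) → c t = κ

def IsEndHomogeneousOn (c : (Fin (r + 1) → α) → C) (X : Finset α) (κ : α → C) : Prop :=
  ∀ x ∈ X, ∀ t : Fin r → α, StrictMono t → (∀ i, x < t i ∧ t i ∈ X) → c (Fin.cons x t) = κ x

theorem exists_isEndHomogeneousOn
    (hR : ∀ m, ∃ N, ∀ A : Finset α, N ≤ #A → ∀ c : (Fin r → α) → C,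
      ∃ B ⊆ A, #B = m ∧ ∃ κ, IsMonochromaticOn c B κ) (s : ℕ) :
    ∃ D, ∀ A : Finset α, D ≤ #A → ∀ c : (Fin (r + 1) → α) → C,
      ∃ X ⊆ A, #X = s ∧ ∃ κ, IsEndHomogeneousOn c X κ := by
  classical
  induction s with
  | zero =>
    refine ⟨0, fun A _ c => ⟨∅, empty_subset A, rfl, fun x => c fun _ => x, ?_⟩⟩
    simp [IsEndHomogeneousOn]
  | succ s ih =>
    -- with `x₀ = min A`, make `A \ {x₀}` monochromatic for `t ↦ c (x₀, t)`, then recurse in it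
    obtain ⟨D, hD⟩ := ih
    obtain ⟨N, hN⟩ := hR D
    refine ⟨N + 1, fun A hA c => ?_⟩
    have hA₀ : A.Nonempty := card_pos.1 (by omega)
    set x₀ := A.min' hA₀
    obtain ⟨B, hBA, hB, κ₀, hκ₀⟩ := hN (A.erase x₀)
      (by rw [card_erase_of_mem (min'_mem A hA₀)]; omega) fun t => c (Fin.cons x₀ t)
    obtain ⟨X, hXB, hX, κ, hκ⟩ := hD B hB.ge c
    have hx₀X : x₀ ∉ X := fun h => (mem_erase.1 (hBA (hXB h))).1 rfl
    have hx₀lt : ∀ x ∈ X, x₀ < x := fun x hx => min'_lt_of_mem_erase_min' A hA₀ (hBA (hXB hx))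
    refine ⟨insert x₀ X, insert_subset (min'_mem A hA₀) ((hXB.trans hBA).trans (erase_subset _ _)),
      by rw [card_insert_of_notMem hx₀X, hX], Function.update κ x₀ κ₀, ?_⟩
    have hx₀le : ∀ x ∈ insert x₀ X, x₀ ≤ x :=
      forall_mem_insert _ _ _ |>.2 ⟨le_rfl, fun x hx => (hx₀lt x hx).le⟩
    have hmemX : ∀ {x y}, x ∈ insert x₀ X → x < y → y ∈ insert x₀ X → y ∈ X :=
      fun hx hxy hy => (mem_insert.1 hy).resolve_left ((hx₀le _ hx).trans_lt hxy).ne'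
    intro x hx t ht hxt
    rcases mem_insert.1 hx with rfl | hxX
    · rw [Function.update_self]
      exact hκ₀ t ht fun i => hXB (hmemX hx (hxt i).1 (hxt i).2)
    · rw [Function.update_of_ne (hx₀lt x hxX).ne']
      exact hκ x hxX t ht fun i => ⟨(hxt i).1, hmemX hx (hxt i).1 (hxt i).2⟩

theorem hypergraph_ramsey [Finite C] (r m : ℕ) :
    ∃ N, ∀ A : Finset α, N ≤ #A → ∀ c : (Fin r → α) → C,
      ∃ B ⊆ A, #B = m ∧ ∃ κ, IsMonochromaticOn c B κ := by
  classical
  have := Fintype.ofFinite C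
  induction r generalizing m with
  | zero =>
    refine ⟨m, fun A hA c => ?_⟩
    obtain ⟨B, hBA, hB⟩ := exists_subset_card_eq hA
    exact ⟨B, hBA, hB, c Fin.elim0, fun t _ _ => congrArg c (Subsingleton.elim _ _)⟩
  | succ r ih =>
    obtain ⟨D, hD⟩ := exists_isEndHomogeneousOn ih (Fintype.card C * m + 1)
    refine ⟨D, fun A hA c => ?_⟩
    obtain ⟨X, hXA, hX, κ, hκ⟩ := hD A hA c
    obtain ⟨κ₀, -, hκ₀⟩ := exists_lt_card_fiber_of_mul_lt_card_of_maps_to (f := κ) (n := m)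
      (fun x _ => mem_univ (κ x)) (by rw [card_univ, hX]; omega)
    obtain ⟨B, hBX, hB⟩ := exists_subset_card_eq (s := {x ∈ X | κ x = κ₀}) (n := m) hκ₀.le
    refine ⟨B, fun x hx => hXA (mem_filter.1 (hBX hx)).1, hB, κ₀, fun t ht htB => ?_⟩
    have hB' : ∀ i, t i ∈ X ∧ κ (t i) = κ₀ := fun i => mem_filter.1 (hBX (htB i))
    rw [← Fin.cons_self_tail t, hκ (t 0) (hB' 0).1 (Fin.tail t)
      (ht.comp Fin.strictMono_succ) fun i => ⟨ht (Fin.succ_pos i), (hB' i.succ).1⟩, (hB' 0).2]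

end Ramsey

theorem Finset.exists_increasing_enumeration {B : Finset ℕ} {M : ℕ} (hB : #B = M + 1) :
    ∃ g : ℕ → ℕ, (∀ i ≤ M, g i ∈ B) ∧ ∀ i j, i < j → j ≤ M → g i < g j := by
  have hf : (Set.ofPred (· ∈ B)).Finite := B.finite_toSet
  have hcard : #hf.toFinset = M + 1 := by
    rw [← hB]; congr 1; ext; simp [Set.ofPred]
  exact ⟨Nat.nth (· ∈ B), fun i hi => Nat.nth_mem_of_lt_card hf (by omega),
    fun i j hij hj => Nat.nth_lt_nth_of_lt_card hf hij (by omega)⟩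

theorem ContainsSubgraph.exists_seq_of_pathGraph {V : Type*} {G : SimpleGraph V} {L : ℕ}
    (h : ContainsSubgraph (pathGraph (L + 1)) G) :
    ∃ P : ℕ → V, Set.InjOn P (Set.Iic L) ∧ ∀ i < L, G.Adj (P i) (P (i + 1)) := by
  obtain ⟨σ, hσinj, hσadj⟩ := h
  refine ⟨fun i => σ (Fin.ofNat (L + 1) i), fun i hi j hj hij => ?_, fun i hi => hσadj ?_⟩
  · have := Fin.val_eq_of_eq (hσinj hij)
    simp only [Fin.val_ofNat] at this
    rwa [Nat.mod_eq_of_lt (Nat.lt_succ_of_le hi), Nat.mod_eq_of_lt (Nat.lt_succ_of_le hj)] at this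
  · simp only [pathGraph_adj, Fin.val_ofNat]
    left
    rw [Nat.mod_eq_of_lt (by omega), Nat.mod_eq_of_lt (by omega)]

namespace SimpleGraph

variable {V : Type*} {G : SimpleGraph V} {u v : V}

theorem Walk.dist_getVert_getVert_of_length_eq_dist (p : G.Walk u v)
    (hp : p.length = G.dist u v) {i j : ℕ} (hij : i ≤ j) (hj : j ≤ p.length) :
    G.dist (p.getVert i) (p.getVert j) = j - i := by
  have hend : (p.drop i).getVert (j - i) = p.getVert j := by
    rw [drop_getVert, Nat.add_sub_cancel' hij]
  have hsub : (((p.drop i).take (j - i)).copy rfl hend).IsSubwalk p :=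
    ((isSubwalk_take _ _).trans (isSubwalk_drop p i)).copy rfl hend rfl rfl
  rw [← length_eq_dist_of_subwalk hp hsub, length_copy, take_length, drop_length]
  omega

theorem Walk.containsInduced_pathGraph_of_length_eq_dist (p : G.Walk u v)
    (hp : p.length = G.dist u v) {n : ℕ} (hn : n ≤ p.length + 1) :
    ContainsInduced (pathGraph n) G := by
  have hdist (a b : Fin n) :
      G.dist (p.getVert a) (p.getVert b) = max (a : ℕ) b - min (a : ℕ) b := by
    rcases le_total (a : ℕ) b with hab | hab
    · rw [p.dist_getVert_getVert_of_length_eq_dist hp hab (by omega)]; omega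
    · rw [dist_comm, p.dist_getVert_getVert_of_length_eq_dist hp hab (by omega)]; omega
  refine ⟨⟨⟨fun a => p.getVert a, fun a b hab => ?_⟩, fun {a b} => ?_⟩⟩
  · have h := hdist a b
    simp only [hab, dist_self] at h
    omega
  · change G.Adj (p.getVert a) (p.getVert b) ↔ _
    rw [← dist_eq_one_iff_adj, hdist, pathGraph_adj]
    omega

theorem Reachable.dist_add_one_lt {k : ℕ} (hG : ¬ContainsInduced (pathGraph k) G)
    (h : G.Reachable u v) : G.dist u v + 1 < k := by
  obtain ⟨p, hp⟩ := h.exists_walk_length_eq_dist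
  by_contra! hk
  exact hG (p.containsInduced_pathGraph_of_length_eq_dist hp (by omega))

theorem reachable_induce_of_adj_succ {S : Set V} (f : ℕ → V) (n : ℕ)
    (hadj : ∀ i < n, G.Adj (f i) (f (i + 1))) (hS : ∀ i ≤ n, f i ∈ S) :
    (G.induce S).Reachable ⟨f 0, hS 0 n.zero_le⟩ ⟨f n, hS n le_rfl⟩ := by
  induction n with
  | zero => rfl
  | succ n ih =>
    refine (ih (fun i hi => hadj i (by omega)) (fun i hi => hS i (by omega))).trans ?_
    exact Adj.reachable (induce_adj.2 (hadj n n.lt_succ_self))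

theorem exists_short_connector {k : ℕ} (hG : ¬ContainsInduced (pathGraph k) G) (f : ℕ → V)
    (n : ℕ) (hadj : ∀ i < n, G.Adj (f i) (f (i + 1))) :
    ∃ (m : ℕ) (w : ℕ → V), m < k ∧ w 0 = f 0 ∧ w m = f n ∧
      (∀ i < m, G.Adj (w i) (w (i + 1))) ∧ ∀ i, ∃ j ≤ n, w i = f j := by
  set S : Set V := {x | ∃ j ≤ n, f j = x}
  obtain ⟨q, hq⟩ := (reachable_induce_of_adj_succ (S := S) f n hadj
    fun i hi => ⟨i, hi, rfl⟩).exists_walk_length_eq_dist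
  have hS : ¬ContainsInduced (pathGraph k) (G.induce S) :=
    fun ⟨e⟩ => hG ⟨e.trans (Embedding.induce S)⟩
  have hlen := q.reachable.dist_add_one_lt hS
  refine ⟨q.length, fun i => q.getVert i, by omega, by simp, by simp,
    fun i hi => induce_adj.1 (q.adj_getVert_succ hi), fun i => ?_⟩
  obtain ⟨j, hj, hfj⟩ := (q.getVert i).2
  exact ⟨j, hj, hfj.symm⟩

theorem exists_short_connectors {k N : ℕ} (hG : ¬ContainsInduced (pathGraph k) G) {P : ℕ → V}
    (hP : ∀ i < N, G.Adj (P i) (P (i + 1))) :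
    ∃ (n : ℕ → ℕ → ℕ) (w : ℕ → ℕ → ℕ → V), ∀ a b, a ≤ b → b ≤ N →
      n a b < k ∧ w a b 0 = P a ∧ w a b (n a b) = P b ∧
      (∀ i < n a b, G.Adj (w a b i) (w a b (i + 1))) ∧ ∀ i, ∃ e, a ≤ e ∧ e ≤ b ∧ w a b i = P e := by
  have hconn : ∀ a b, ∃ (n : ℕ) (w : ℕ → V), a ≤ b → b ≤ N → n < k ∧ w 0 = P a ∧ w n = P b ∧
      (∀ i < n, G.Adj (w i) (w (i + 1))) ∧ ∀ i, ∃ e, a ≤ e ∧ e ≤ b ∧ w i = P e := by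
    intro a b
    by_cases hab : a ≤ b ∧ b ≤ N
    · obtain ⟨n, w, hn, hw0, hwn, hwadj, hwP⟩ := exists_short_connector hG (fun i => P (a + i))
        (b - a) fun i hi => hP (a + i) (by omega)
      refine ⟨n, w, fun _ _ => ⟨hn, hw0, by rw [hwn]; congr 1; omega, hwadj, fun i => ?_⟩⟩
      obtain ⟨j, hj, hwj⟩ := hwP i
      exact ⟨a + j, by omega, by omega, hwj⟩
    · exact ⟨0, fun _ => P a, fun h h' => absurd ⟨h, h'⟩ hab⟩
  choose n w hw using hconn
  exact ⟨n, w, hw⟩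

theorem Walk.le_add_length_of_layers {B : ℕ → Set V} (hcover : ∀ x, ∃ r, x ∈ B r)
    (hfar : ∀ r r', r + 2 ≤ r' → ∀ x ∈ B r, ∀ y ∈ B r', ¬G.Adj x y)
    (p : G.Walk u v) (r₀ : ℕ) (hu : ∀ r, u ∈ B r → r ≤ r₀) :
    ∀ r, v ∈ B r → r ≤ r₀ + p.length := by
  induction p generalizing r₀ with
  | nil => simpa using hu
  | @cons u w v h p ih =>
    have hw : ∀ r', w ∈ B r' → r' ≤ r₀ + 1 := by
      intro r' hr'
      obtain ⟨r, hr⟩ := hcover u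
      have := hu r hr
      by_contra! hlt
      exact hfar r r' (by omega) u hr w hr' h
    intro r hr
    have := ih (r₀ + 1) hw r hr
    simp only [length_cons]
    omega

theorem containsInduced_pathGraph_of_chain (w : ℕ → ℕ → V) (n : ℕ → ℕ) (K : ℕ)
    (hlink : ∀ r < K, w r (n r) = w (r + 1) 0)
    (hadj : ∀ r ≤ K, ∀ i < n r, G.Adj (w r i) (w r (i + 1)))
    (hfar : ∀ r r', r + 2 ≤ r' → r' ≤ K → ∀ i ≤ n r, ∀ i' ≤ n r', ¬G.Adj (w r i) (w r' i'))
    (hstart : ∀ r ≤ K, ∀ i ≤ n r, w r i = w 0 0 → r = 0) :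
    ContainsInduced (pathGraph (K + 1)) G := by
  set S : Set V := {x | ∃ r ≤ K, ∃ i ≤ n r, w r i = x}
  have hS : ∀ r ≤ K, ∀ i ≤ n r, w r i ∈ S := fun r hr i hi => ⟨r, hr, i, hi, rfl⟩
  have hreach : ∀ r (hr : r ≤ K), (G.induce S).Reachable
      ⟨w 0 0, hS 0 K.zero_le 0 (n 0).zero_le⟩ ⟨w r (n r), hS r hr _ le_rfl⟩ := by
    intro r hr
    induction r with
    | zero => exact reachable_induce_of_adj_succ (w 0) (n 0) (hadj 0 hr) (hS 0 hr)
    | succ r ih =>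
      have hlast := reachable_induce_of_adj_succ (w (r + 1)) (n (r + 1)) (hadj _ hr) (hS _ hr)
      simp only [← hlink r hr] at hlast
      exact (ih (by omega)).trans hlast
  obtain ⟨q, hq⟩ := (hreach K le_rfl).exists_walk_length_eq_dist
  set B : ℕ → Set S := fun r => {x | r ≤ K ∧ ∃ i ≤ n r, w r i = x}
  have hlen : K ≤ 0 + q.length := by
    refine q.le_add_length_of_layers (B := B) ?_ ?_ 0 ?_ K ⟨le_rfl, n K, le_rfl, rfl⟩
    · rintro ⟨x, r, hr, i, hi, rfl⟩
      exact ⟨r, hr, i, hi, rfl⟩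
    · rintro r r' hrr' x ⟨-, i, hi, hx⟩ y ⟨hr', i', hi', hy⟩ hxy
      exact hfar r r' hrr' hr' i hi i' hi' (by rw [hx, hy]; exact hxy)
    · rintro r ⟨hr, i, hi, hw⟩
      exact (hstart r hr i hi hw).le
  obtain ⟨e⟩ := q.containsInduced_pathGraph_of_length_eq_dist hq (n := K + 1) (by omega)
  exact ⟨e.trans (Embedding.induce S)⟩

theorem exists_isIndepSet_card_eq_of_hom {W : Type*} [Fintype W] {H : SimpleGraph W}
    (f : G →g H) {t : ℕ} (X : Finset V) (hX : Fintype.card W * (t - 1) < #X) :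
    ∃ X' ⊆ X, #X' = t ∧ G.IsIndepSet X' := by
  classical
  obtain ⟨c, -, hc⟩ := exists_lt_card_fiber_of_mul_lt_card_of_maps_to
    (fun x _ => mem_univ (f x)) (by rwa [card_univ])
  obtain ⟨X', hX'c, hX'⟩ := exists_subset_card_eq (s := {x ∈ X | f x = c}) (n := t) (by omega)
  refine ⟨X', hX'c.trans (filter_subset _ _), hX', fun x hx y hy _ hxy => ?_⟩
  have hfx := (mem_filter.1 (hX'c hx)).2
  have hfy := (mem_filter.1 (hX'c hy)).2
  exact H.irrefl (hfx ▸ hfy ▸ f.map_adj hxy)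

theorem containsInduced_completeBipartiteGraph {t : ℕ} (X Y : Finset V) (hX : #X = t)
    (hY : #Y = t) (hXi : G.IsIndepSet X) (hYi : G.IsIndepSet Y)
    (hXY : ∀ x ∈ X, ∀ y ∈ Y, G.Adj x y) :
    ContainsInduced (completeBipartiteGraph (Fin t) (Fin t)) G := by
  set x : Fin t → V := fun i => (X.equivFinOfCardEq hX).symm i
  set y : Fin t → V := fun j => (Y.equivFinOfCardEq hY).symm j
  have hx : ∀ i, x i ∈ X := fun i => ((X.equivFinOfCardEq hX).symm i).2
  have hy : ∀ j, y j ∈ Y := fun j => ((Y.equivFinOfCardEq hY).symm j).2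
  have hxinj : x.Injective := fun i i' h =>
    (X.equivFinOfCardEq hX).symm.injective (Subtype.ext h)
  have hyinj : y.Injective := fun j j' h =>
    (Y.equivFinOfCardEq hY).symm.injective (Subtype.ext h)
  have hxy : ∀ i j, G.Adj (x i) (y j) := fun i j => hXY _ (hx i) _ (hy j)
  have hxx : ∀ i i', ¬G.Adj (x i) (x i') := fun i i' h =>
    hXi (hx i) (hx i') (fun he => G.irrefl (he ▸ h)) h
  have hyy : ∀ j j', ¬G.Adj (y j) (y j') := fun j j' h =>
    hYi (hy j) (hy j') (fun he => G.irrefl (he ▸ h)) h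
  refine ⟨⟨⟨Sum.elim x y, ?_⟩, ?_⟩⟩
  · rintro (i | j) (i' | j') h
    · exact congrArg _ (hxinj h)
    · exact absurd (hxy i j') (by rw [show x i = y j' from h]; exact G.irrefl)
    · exact absurd (hxy i' j) (by rw [show x i' = y j from h.symm]; exact G.irrefl)
    · exact congrArg _ (hyinj h)
  · rintro (i | j) (i' | j')
    · change G.Adj (x i) (x i') ↔ _; simp [hxx]
    · change G.Adj (x i) (y j') ↔ _; simp [hxy]
    · change G.Adj (y j) (x i') ↔ _; simp [(hxy _ _).symm]
    · change G.Adj (y j) (y j') ↔ _; simp [hyy]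

theorem containsInduced_completeBipartiteGraph_of_hom {W : Type*} [Fintype W]
    {H : SimpleGraph W} (f : G →g H) {t : ℕ} (X Y : Finset V)
    (hX : Fintype.card W * (t - 1) < #X) (hY : Fintype.card W * (t - 1) < #Y)
    (hXY : ∀ x ∈ X, ∀ y ∈ Y, G.Adj x y) :
    ContainsInduced (completeBipartiteGraph (Fin t) (Fin t)) G := by
  obtain ⟨X', hX'X, hX', hX'i⟩ := exists_isIndepSet_card_eq_of_hom f X hX
  obtain ⟨Y', hY'Y, hY', hY'i⟩ := exists_isIndepSet_card_eq_of_hom f Y hY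
  exact containsInduced_completeBipartiteGraph X' Y' hX' hY' hX'i hY'i
    fun x hx y hy => hXY x (hX'X hx) y (hY'Y hy)

/-- The connectors `vert r 0, …, vert r (len r)` of consecutive intervals `[g r, g (r + 1)]` of a
long path, after Ramsey: any two connectors that are not neighbours see each other through the same
adjacency `pattern` of positions. -/
structure HomogeneousChain (G : SimpleGraph V) (k M : ℕ) where
  vert : ℕ → ℕ → V
  len : ℕ → ℕ
  pattern : Fin k → Fin k → Prop
  vert_len : ∀ r, r + 1 < M → vert r (len r) = vert (r + 1) 0
  adj : ∀ r < M, ∀ i < len r, G.Adj (vert r i) (vert r (i + 1))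
  len_lt : ∀ r < M, len r < k
  ne_of_far : ∀ r r', r + 2 ≤ r' → r' < M → ∀ i i', vert r i ≠ vert r' i'
  eq_start : ∀ r < M, ∀ i, vert r i = vert 0 0 → r = 0
  adj_iff : ∀ r r', r + 2 ≤ r' → r' < M → ∀ p p' : Fin k,
    G.Adj (vert r p) (vert r' p') ↔ pattern p p'

theorem exists_homogeneousChain (k M : ℕ) :
    ∃ L, ∀ {V : Type*} (G : SimpleGraph V), ¬ContainsInduced (pathGraph k) G →
      ContainsSubgraph (pathGraph L) G → Nonempty (HomogeneousChain G k M) := by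
  obtain ⟨N, hN⟩ := hypergraph_ramsey (α := ℕ) (C := Fin k → Fin k → Prop) 4 (M + 1)
  refine ⟨N + 1, fun {V} G hG hpath => ?_⟩
  obtain ⟨P, hPinj, hPadj⟩ := hpath.exists_seq_of_pathGraph
  obtain ⟨n, w, hw⟩ := exists_short_connectors hG hPadj
  obtain ⟨B, hBN, hB, κ, hκ⟩ := hN (range (N + 1)) (by simp)
    fun q p p' => G.Adj (w (q 0) (q 1) p) (w (q 2) (q 3) p')
  obtain ⟨g, hgB, hgmono⟩ := exists_increasing_enumeration hB
  have hgN : ∀ i ≤ M, g i ≤ N := fun i hi => Nat.lt_succ_iff.1 (mem_range.1 (hBN (hgB i hi)))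
  have hblock (r : ℕ) (hr : r < M) := hw (g r) (g (r + 1))
    (hgmono r (r + 1) (by omega) (by omega)).le (hgN (r + 1) (by omega))
  refine ⟨⟨fun r => w (g r) (g (r + 1)), fun r => n (g r) (g (r + 1)), κ, ?_, ?_, ?_, ?_, ?_, ?_⟩⟩
  · intro r hr
    obtain ⟨-, -, hend, -⟩ := hblock r (by omega)
    obtain ⟨-, hstart, -⟩ := hblock (r + 1) hr
    rw [hend, hstart]
  · intro r hr
    obtain ⟨-, -, -, hadj, -⟩ := hblock r hr
    exact hadj
  · exact fun r hr => (hblock r hr).1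
  · intro r r' hrr' hr' i i' h
    obtain ⟨-, -, -, -, hvert⟩ := hblock r (by omega)
    obtain ⟨-, -, -, -, hvert'⟩ := hblock r' hr'
    obtain ⟨e, -, he, hwe⟩ := hvert i
    obtain ⟨e', he', he'N, hwe'⟩ := hvert' i'
    have hlt := hgmono (r + 1) r' (by omega) (by omega)
    have hle := hgN (r' + 1) (by omega)
    have := hPinj (show e ≤ N by omega) (show e' ≤ N by omega) (hwe ▸ hwe' ▸ h)
    omega
  · intro r hr i h
    obtain ⟨-, -, -, -, hvert⟩ := hblock r hr
    obtain ⟨e, he, he', hwe⟩ := hvert i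
    obtain ⟨-, hstart, -⟩ := hblock 0 (by omega)
    have hle := hgN (r + 1) (by omega)
    have := hPinj (show e ≤ N by omega) (show g 0 ≤ N from hgN 0 (by omega))
      (by rw [← hwe, h, hstart])
    by_contra hr0
    have := hgmono 0 r (by omega) hr.le
    omega
  · intro r r' hrr' hr' p p'
    have hq := hκ ![g r, g (r + 1), g r', g (r' + 1)] ?_ ?_
    · exact Iff.of_eq (congrFun (congrFun hq p) p')
    · refine Fin.strictMono_iff_lt_succ.2 fun i => ?_
      fin_cases i <;> simp <;> apply hgmono <;> omega
    · intro i
      fin_cases i <;> simp <;> apply hgB <;> omega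

namespace HomogeneousChain

variable {k M : ℕ} (c : HomogeneousChain G k M)

theorem containsInduced_pathGraph (hk : 1 ≤ k) (hkM : k ≤ M)
    (hpat : ∀ p p', ¬c.pattern p p') : ContainsInduced (pathGraph k) G := by
  obtain ⟨K, rfl⟩ : ∃ K, k = K + 1 := ⟨k - 1, by omega⟩
  refine containsInduced_pathGraph_of_chain c.vert c.len K (fun r hr => c.vert_len r (by omega))
    (fun r hr => c.adj r (by omega)) (fun r r' hrr' hr' i hi i' hi' h => ?_)
    (fun r hr i _ => c.eq_start r (by omega) i)
  have hi := (c.len_lt r (by omega)).trans_le' hi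
  have hi' := (c.len_lt r' (by omega)).trans_le' hi'
  exact hpat ⟨i, hi⟩ ⟨i', hi'⟩ ((c.adj_iff r r' hrr' (by omega) ⟨i, hi⟩ ⟨i', hi'⟩).1 h)

theorem containsInduced_completeBipartiteGraph {W : Type*} [Fintype W] {H : SimpleGraph W}
    (f : G →g H) {t : ℕ} (hM : 4 * (Fintype.card W * (t - 1) + 1) ≤ M) {p p' : Fin k}
    (hp : c.pattern p p') : ContainsInduced (completeBipartiteGraph (Fin t) (Fin t)) G := by
  classical
  set s := Fintype.card W * (t - 1) + 1
  have hinj (q : Fin k) : Set.InjOn (fun i => c.vert (2 * i) q) (Set.Iio (2 * s)) := by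
    intro i hi j hj h
    by_contra hij
    rcases Nat.lt_or_gt_of_ne hij with hij | hij
    · exact c.ne_of_far _ _ (by omega) (by simp at hj; omega) q q h
    · exact c.ne_of_far _ _ (by omega) (by simp at hi; omega) q q h.symm
  have hX : #((range s).image fun i => c.vert (2 * i) p) = s := by
    rw [card_image_of_injOn ((hinj p).mono fun i hi => by simp at hi ⊢; omega), card_range]
  have hY : #((Ico s (2 * s)).image fun j => c.vert (2 * j) p') = s := by
    rw [card_image_of_injOn ((hinj p').mono fun i hi => by simp at hi ⊢; omega), Nat.card_Ico]
    omega
  refine SimpleGraph.containsInduced_completeBipartiteGraph_of_hom f _ _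
    (by rw [hX]; omega) (by rw [hY]; omega) ?_
  simp only [mem_image, mem_range, mem_Ico]
  rintro _ ⟨i, hi, rfl⟩ _ ⟨j, hj, rfl⟩
  exact (c.adj_iff _ _ (by omega) (by omega) p p').2 hp

end HomogeneousChain

end SimpleGraph

theorem H_colorable_graphs_have_no_long_paths_general
    (W : Type) [Fintype W] (H : SimpleGraph W) (k t : ℕ) (hk : 1 ≤ k) :
    ∃ l : ℕ, ∀ (V : Type) [Fintype V] (G : SimpleGraph V),
      ¬ ContainsInduced (pathGraph k) G →
      ¬ ContainsInduced (completeBipartiteGraph (Fin t) (Fin t)) G →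
      Nonempty (G →g H) →
      ¬ ContainsSubgraph (pathGraph l) G := by
  obtain ⟨l, hl⟩ := exists_homogeneousChain k (4 * (Fintype.card W * (t - 1) + 1) + k)
  refine ⟨l, fun V _ G hP hK ⟨f⟩ hpath => ?_⟩
  obtain ⟨c⟩ := hl G hP hpath
  by_cases hpat : ∃ p p', c.pattern p p'
  · obtain ⟨p, p', hp⟩ := hpat
    exact hK (c.containsInduced_completeBipartiteGraph f (by omega) hp)
  · simp only [not_exists] at hpat
    exact hP (c.containsInduced_pathGraph hk (by omega) hpat)

theorem H_colorable_graphs_have_no_long_paths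
    (W : Type) [Fintype W] (H : SimpleGraph W) (k t : ℕ) (hk : 1 ≤ k) (ht : 1 ≤ t) :
    ∃ l : ℕ, ∀ (V : Type) [Fintype V] (G : SimpleGraph V),
      ¬ ContainsInduced (pathGraph k) G →
      ¬ ContainsInduced (completeBipartiteGraph (Fin t) (Fin t)) G →
      Nonempty (G →g H) →
      ¬ ContainsSubgraph (pathGraph l) G :=
  H_colorable_graphs_have_no_long_paths_general W H k t hk
end

section
/- Let k ≥ 4 be an integer and let G be a finite simple graph that is P_k-free and not bipartite. Then there exists an odd integer m with 3 ≤ m ≤ k such that G contains the cycle C_m as an induced subgraph. -/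
open SimpleGraph

/-!
A non-bipartite graph has an odd closed walk. A shortest one is an induced cycle `C_n`: a repeated
vertex or a chord would split it into two shorter closed walks, one of which is odd. If `n > k`,
any `k` consecutive vertices of this cycle induce `P_k`.
-/

open Function

namespace SimpleGraph

variable {V : Type*} {G : SimpleGraph V}

/-- A closed walk of length `n`, given by its vertex sequence extended `n`-periodically to `ℕ`. -/
structure IsClosedWalk (G : SimpleGraph V) (n : ℕ) (c : ℕ → V) : Prop where
  periodic : Periodic c n
  adj : ∀ i, G.Adj (c i) (c (i + 1))

lemma isClosedWalk_mod_succ {m : ℕ} {c : ℕ → V} (hadj : ∀ i < m, G.Adj (c i) (c (i + 1)))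
    (hclose : G.Adj (c m) (c 0)) : G.IsClosedWalk (m + 1) (fun i => c (i % (m + 1))) where
  periodic i := by simp only [Nat.add_mod_right]
  adj i := by
    obtain h | h := (Nat.lt_add_one_iff.mp (Nat.mod_lt i (by omega : 0 < m + 1))).lt_or_eq
    · have hsucc : (i + 1) % (m + 1) = i % (m + 1) + 1 := by
        rw [Nat.add_mod, Nat.one_mod_eq_one.mpr (by omega)]
        exact Nat.mod_eq_of_lt (by omega)
      rw [hsucc]
      exact hadj _ h
    · rw [h, Nat.succ_mod_succ_eq_zero_iff.mpr h]
      exact hclose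

lemma Walk.isClosedWalk_getVert_mod {u : V} (w : G.Walk u u) (hw : w.length ≠ 0) :
    G.IsClosedWalk w.length (fun i => w.getVert (i % w.length)) := by
  obtain ⟨m, hm⟩ := Nat.exists_eq_add_one_of_ne_zero hw
  have hclose : G.Adj (w.getVert m) (w.getVert 0) := by
    simpa [← hm] using w.adj_getVert_succ (i := m) (by omega)
  rw [hm]
  exact isClosedWalk_mod_succ (fun i hi => w.adj_getVert_succ (by omega)) hclose

lemma exists_odd_isClosedWalk_of_not_colorable (h : ¬ G.Colorable 2) :
    ∃ n, Odd n ∧ ∃ c, G.IsClosedWalk n c := by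
  obtain ⟨u, w, hw⟩ : ∃ u, ∃ w : G.Walk u u, Odd w.length := by
    simpa [two_colorable_iff_forall_loop_even] using h
  exact ⟨_, hw, _, w.isClosedWalk_getVert_mod hw.pos.ne'⟩

namespace IsClosedWalk

variable {n m : ℕ} {c : ℕ → V}

lemma shift (hc : G.IsClosedWalk n c) (s : ℕ) : G.IsClosedWalk n (fun i => c (s + i)) :=
  ⟨hc.periodic.const_add s, fun i => hc.adj (s + i)⟩

lemma mod_of_eq (hc : G.IsClosedWalk n c) (hm : 0 < m) (h : c m = c 0) :
    G.IsClosedWalk m (fun i => c (i % m)) := by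
  obtain ⟨m, rfl⟩ := Nat.exists_eq_add_one_of_ne_zero hm.ne'
  exact isClosedWalk_mod_succ (fun i _ => hc.adj i) (h ▸ hc.adj m)

/-- A closed walk through `c 0 = c m` is the concatenation of closed walks of lengths
`m` and `n - m`, one of which is odd when `n` is. -/
lemma exists_shorter_odd_of_eq (hc : G.IsClosedWalk n c) (hn : Odd n) (hm : 0 < m)
    (hmn : m < n) (h : c m = c 0) : ∃ l < n, Odd l ∧ ∃ d, G.IsClosedWalk l d := by
  obtain hodd | hodd : Odd m ∨ Odd (n - m) := by simp only [Nat.odd_iff] at hn ⊢; omega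
  · exact ⟨m, hmn, hodd, _, hc.mod_of_eq hm h⟩
  · refine ⟨n - m, by omega, hodd, _, (hc.shift m).mod_of_eq (by omega) ?_⟩
    simp only [Nat.add_sub_cancel' hmn.le, hc.periodic.eq, h, Nat.add_zero]

/-- A chord from `c 0` to `c m` splits the closed walk into closed walks of lengths `m + 1`
and `n - m + 1`, whose sum `n + 2` is odd. -/
lemma exists_shorter_odd_of_adj (hc : G.IsClosedWalk n c) (hn : Odd n) (hm : 2 ≤ m)
    (hmn : m + 2 ≤ n) (h : G.Adj (c m) (c 0)) : ∃ l < n, Odd l ∧ ∃ d, G.IsClosedWalk l d := by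
  obtain hodd | hodd : Odd (m + 1) ∨ Odd (n - m + 1) := by
    simp only [Nat.odd_iff] at hn ⊢; omega
  · exact ⟨m + 1, by omega, hodd, _, isClosedWalk_mod_succ (fun i _ => hc.adj i) h⟩
  · refine ⟨n - m + 1, by omega, hodd, _,
      isClosedWalk_mod_succ (c := fun i => c (m + i)) (fun i _ => hc.adj (m + i)) ?_⟩
    simpa only [Nat.add_sub_cancel' (by omega : m ≤ n), hc.periodic.eq, Nat.add_zero] using h.symm

end IsClosedWalk

structure IsShortestOddClosedWalk (G : SimpleGraph V) (n : ℕ) (c : ℕ → V) : Prop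
    extends G.IsClosedWalk n c where
  odd : Odd n
  minimal : ¬ ∃ l < n, Odd l ∧ ∃ d, G.IsClosedWalk l d

lemma exists_isShortestOddClosedWalk (h : ∃ n, Odd n ∧ ∃ c, G.IsClosedWalk n c) :
    ∃ n c, G.IsShortestOddClosedWalk n c := by
  classical
  obtain ⟨hodd, c, hc⟩ := Nat.find_spec h
  exact ⟨_, c, hc, hodd, fun ⟨l, hl, hlodd, hld⟩ => Nat.find_min h hl ⟨hlodd, hld⟩⟩

namespace IsShortestOddClosedWalk

variable {n m : ℕ} {c : ℕ → V}

lemma three_le (hc : G.IsShortestOddClosedWalk n c) : 3 ≤ n := by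
  have hn1 : n ≠ 1 := by
    rintro rfl
    exact G.irrefl (hc.periodic.eq ▸ hc.adj 0)
  have := hc.odd
  rw [Nat.odd_iff] at this
  omega

lemma apply_add_ne (hc : G.IsShortestOddClosedWalk n c) (hm : 0 < m) (hmn : m < n) (s : ℕ) :
    c (s + m) ≠ c s :=
  fun h => hc.minimal ((hc.shift s).exists_shorter_odd_of_eq hc.odd hm hmn h)

lemma adj_add_iff (hc : G.IsShortestOddClosedWalk n c) (hm : 0 < m) (hmn : m < n) (s : ℕ) :
    G.Adj (c s) (c (s + m)) ↔ m = 1 ∨ m + 1 = n := by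
  refine ⟨fun h => ?_, ?_⟩
  · by_contra! hne
    exact hc.minimal ((hc.shift s).exists_shorter_odd_of_adj hc.odd (by omega) (by omega) h.symm)
  · rintro (rfl | rfl)
    · exact hc.adj s
    · simpa only [add_assoc, hc.periodic s] using (hc.adj (s + m)).symm

end IsShortestOddClosedWalk

def Embedding.ofLT {α : Type*} [LinearOrder α] {H : SimpleGraph α} (f : α → V)
    (hne : ∀ ⦃i j⦄, i < j → f i ≠ f j) (hadj : ∀ ⦃i j⦄, i < j → (G.Adj (f i) (f j) ↔ H.Adj i j)) :
    H ↪g G where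
  toFun := f
  inj' i j h := by
    by_contra hij
    obtain hlt | hgt := lt_or_gt_of_ne hij
    · exact hne hlt h
    · exact hne hgt h.symm
  map_rel_iff' {i j} := by
    rcases lt_trichotomy i j with h | rfl | h
    · exact hadj h
    · simp
    · rw [G.adj_comm, H.adj_comm]
      exact hadj h

lemma cycleGraph_adj_of_lt {n : ℕ} {i j : Fin n} (h : i < j) :
    (cycleGraph n).Adj i j ↔ (j : ℕ) - i = 1 ∨ (j : ℕ) - i + 1 = n := by
  rw [cycleGraph_adj', Fin.sub_val_of_le h.le, Fin.coe_sub_iff_lt.mpr h]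
  omega

def Embedding.pathGraphCycleGraph {k n : ℕ} (h : k < n) : pathGraph k ↪g cycleGraph n :=
  Embedding.ofLT (Fin.castLE h.le) (fun _ _ hij => (Fin.castLE_injective _).ne hij.ne)
    fun i j hij => by
      rw [cycleGraph_adj_of_lt (by simpa using hij), pathGraph_adj]
      simp only [Fin.val_castLE]
      omega

def IsShortestOddClosedWalk.embedding {n : ℕ} {c : ℕ → V} (hc : G.IsShortestOddClosedWalk n c) :
    cycleGraph n ↪g G :=
  Embedding.ofLT (fun i => c i) (fun i j hij => Ne.symm <| by
      simpa [Nat.add_sub_cancel' hij.le] using hc.apply_add_ne (m := j - i) (by omega) (by omega) i)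
    fun i j hij => by
      rw [cycleGraph_adj_of_lt hij, ← hc.adj_add_iff (by omega) (by omega) i,
        Nat.add_sub_cancel' (Fin.le_of_lt hij)]

end SimpleGraph

theorem non_bipartite_path_free_has_short_odd_hole_general
    (k : ℕ) (V : Type) (G : SimpleGraph V)
    (hPfree : ¬ ContainsInduced (pathGraph k) G)
    (hnotbip : ¬ ∃ f : V → Bool, ∀ ⦃u v⦄, G.Adj u v → f u ≠ f v) :
    ∃ m : ℕ, Odd m ∧ 3 ≤ m ∧ m ≤ k ∧ ContainsInduced (cycleGraph m) G := by
  have hnotcol : ¬ G.Colorable 2 := fun ⟨C⟩ =>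
    hnotbip ⟨recolorOfEquiv G finTwoEquiv C, fun _ _ => Coloring.valid _⟩
  obtain ⟨n, c, hc⟩ :=
    exists_isShortestOddClosedWalk (exists_odd_isClosedWalk_of_not_colorable hnotcol)
  have hnk : n ≤ k := by
    by_contra! hkn
    exact hPfree ⟨(Embedding.pathGraphCycleGraph hkn).trans hc.embedding⟩
  exact ⟨n, hc.odd, hc.three_le, hnk, ⟨hc.embedding⟩⟩

theorem non_bipartite_path_free_has_short_odd_hole
    (k : ℕ) (hk : 4 ≤ k) (V : Type) [Fintype V] (G : SimpleGraph V)
    (hPfree : ¬ ContainsInduced (pathGraph k) G)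
    (hnotbip : ¬ ∃ f : V → Bool, ∀ ⦃u v⦄, G.Adj u v → f u ≠ f v) :
    ∃ m : ℕ, Odd m ∧ 3 ≤ m ∧ m ≤ k ∧ ContainsInduced (cycleGraph m) G :=
  non_bipartite_path_free_has_short_odd_hole_general k V G hPfree hnotbip
end

section
/- Let k ≥ 7 be an odd integer and let G be a finite simple graph that is P_k-free and contains no cycle on m vertices as a subgraph for any odd m with 3 ≤ m < k - 2. Let c : Z/kZ → V(G) be injective with c(a) adjacent to c(b) if and only if b - a = ±1 (so the image of c is an induced cycle on k vertices), and let v be a vertex not in the image of c that has at least one neighbor in the image of c. Then there exists i ∈ Z/kZ such that the set of neighbors of v in the image of c is exactly {c(i), c(i+2)}, or exactly {c(i), c(i+4)}, or exactly {c(i), c(i+2), c(i+4)}. -/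
open SimpleGraph

/-!
If `c a` were the only neighbour of `v` on the cycle, then `v, c a, c (a + 1), …, c (a + k - 2)`
would be an induced `P_k`. If `v` sees `c a` and `c b` and the arc from `a` to `b` has odd
length `d < k - 4`, then `v` closes it into an odd cycle on `d + 2 < k - 2` vertices. Applied to
both arcs between two neighbours, this forces `b - a = ±2` or `±4`; and since `k` is odd and
at least `7`, a set of at least two residues with all differences in `{±2, ±4}` lies in some
window `{i, i + 2, i + 4}` and contains `i`.
-/

theorem Set.eq_pair_or_eq_triple_of_subset {α : Type*} {S : Set α} {i j l : α} (hi : i ∈ S)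
    (hsub : S ⊆ {i, j, l}) (hS : S.Nontrivial) : S = {i, j} ∨ S = {i, l} ∨ S = {i, j, l} := by
  by_cases hj : j ∈ S <;> by_cases hl : l ∈ S
  · exact Or.inr (Or.inr (hsub.antisymm (by simp [Set.insert_subset_iff, *])))
  · refine Or.inl (Set.Subset.antisymm (fun x hx => ?_) (by simp [Set.insert_subset_iff, *]))
    rcases hsub hx with rfl | rfl | rfl <;> simp_all
  · refine Or.inr (Or.inl (Set.Subset.antisymm (fun x hx => ?_)
      (by simp [Set.insert_subset_iff, *])))
    rcases hsub hx with rfl | rfl | rfl <;> simp_all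
  · refine absurd (fun x hx => ?_) (hS.not_subset_singleton (x := i))
    rcases hsub hx with rfl | rfl | rfl <;> simp_all

namespace ZMod

variable {k : ℕ}

theorem natCast_eq_natCast_iff_of_lt {x y : ℕ} (hx : x < k) (hy : y < k) :
    (x : ZMod k) = y ↔ x = y :=
  (CharP.natCast_injOn_Iio (ZMod k) k).eq_iff hx hy

theorem natCast_ne_zero_of_even (hk : Odd k) {n : ℕ} (hn : Even n) (hpos : 0 < n)
    (hlt : n < 2 * k) : (n : ZMod k) ≠ 0 := by
  rw [Ne, natCast_eq_zero_iff]
  rintro ⟨m, rfl⟩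
  obtain rfl : m = 1 := by
    have : 0 < m := Nat.pos_of_mul_pos_left hpos
    have : m < 2 := Nat.lt_of_mul_lt_mul_left (a := k) (by linarith)
    omega
  exact Nat.not_even_iff_odd.mpr hk (by simpa using hn)

theorem mem_pm_two_pm_four_of_odd_val (hk : Odd k) {x : ZMod k} (hx : x ≠ 0)
    (hpos : Odd x.val → k - 4 ≤ x.val) (hneg : Odd (-x).val → k - 4 ≤ (-x).val) :
    x ∈ ({2, -2, 4, -4} : Set (ZMod k)) := by
  have : NeZero k := ⟨hk.pos.ne'⟩
  have : NeZero x := ⟨hx⟩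
  have hval : 0 < x.val := by rwa [pos_iff_ne_zero, Ne, val_eq_zero]
  have hlt : x.val < k := val_lt x
  rw [val_neg_of_ne_zero] at hneg
  obtain ⟨r, hr⟩ := hk
  rcases Nat.even_or_odd x.val with ⟨s, hs⟩ | ⟨s, hs⟩
  · have : x.val = 2 ∨ x.val = 4 := by
      have := hneg ⟨r - s, by omega⟩
      omega
    rw [← natCast_zmod_val x]
    rcases this with h | h <;> simp [h]
  · have : x.val + 2 = k ∨ x.val + 4 = k := by
      have := hpos ⟨s, hs⟩
      omega
    rcases this with h | h
    all_goals
      have h0 := congrArg (Nat.cast : ℕ → ZMod k) h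
      push_cast [natCast_zmod_val, natCast_self] at h0
    · exact Or.inr (Or.inl (by linear_combination h0))
    · exact Or.inr (Or.inr (Or.inr (Set.mem_singleton_iff.mpr (by linear_combination h0))))

theorem six_notMem_and_eight_notMem (hk : 7 ≤ k) (hodd : Odd k) :
    (6 : ZMod k) ∉ ({0, 2, -2, 4, -4} : Set (ZMod k)) ∧
      (8 : ZMod k) ∉ ({0, 2, -2, 4, -4} : Set (ZMod k)) := by
  have h (n : ℕ) (hn : Even n := by decide) (hpos : 0 < n := by decide)
      (hle : n ≤ 12 := by decide) : (n : ZMod k) ≠ 0 :=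
    natCast_ne_zero_of_even hodd hn hpos (by omega)
  have h2 : (2 : ZMod k) ≠ 0 := by exact_mod_cast h 2
  have h4 : (4 : ZMod k) ≠ 0 := by exact_mod_cast h 4
  have h6 : (6 : ZMod k) ≠ 0 := by exact_mod_cast h 6
  have h8 : (8 : ZMod k) ≠ 0 := by exact_mod_cast h 8
  have h10 : (10 : ZMod k) ≠ 0 := by exact_mod_cast h 10
  have h12 : (12 : ZMod k) ≠ 0 := by exact_mod_cast h 12
  simp only [Set.mem_insert_iff, Set.mem_singleton_iff, not_or]
  refine ⟨⟨h6, fun e => h4 ?_, fun e => h8 ?_, fun e => h2 ?_, fun e => h10 ?_⟩,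
    ⟨h8, fun e => h6 ?_, fun e => h10 ?_, fun e => h4 ?_, fun e => h12 ?_⟩⟩ <;>
    linear_combination e

theorem subset_of_pairwise_sub_mem {S : Set (ZMod k)}
    (hS : S.Pairwise fun a b => b - a ∈ ({2, -2, 4, -4} : Set (ZMod k))) {a : ZMod k}
    (ha : a ∈ S) : S ⊆ {a - 4, a - 2, a, a + 2, a + 4} := by
  intro x hx
  by_cases hxa : x = a
  · simp [hxa]
  have := hS ha hx (Ne.symm hxa)
  simp only [Set.mem_insert_iff, Set.mem_singleton_iff] at this ⊢
  rcases this with e | e | e | e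
  · right; right; right; left; linear_combination e
  · right; left; linear_combination e
  · right; right; right; right; linear_combination e
  · left; linear_combination e

theorem exists_eq_of_pairwise_sub_mem (hk : 7 ≤ k) (hodd : Odd k) {S : Set (ZMod k)}
    (hS : S.Pairwise fun a b => b - a ∈ ({2, -2, 4, -4} : Set (ZMod k)))
    (hne : S.Nontrivial) :
    ∃ i, S = {i, i + 2} ∨ S = {i, i + 4} ∨ S = {i, i + 2, i + 4} := by
  have far {x y : ZMod k} (hx : x ∈ S) (hy : y ∈ S) (hxy : y - x = 6 ∨ y - x = 8) : False := by
    have hmem : y - x ∈ ({0, 2, -2, 4, -4} : Set (ZMod k)) := by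
      by_cases h : x = y
      · simp [h]
      · exact Set.mem_insert_of_mem _ (hS hx hy h)
    obtain ⟨h6, h8⟩ := six_notMem_and_eight_notMem hk hodd
    rcases hxy with e | e <;> rw [e] at hmem
    exacts [h6 hmem, h8 hmem]
  obtain ⟨a, ha⟩ := hne.nonempty
  have hwin := subset_of_pairwise_sub_mem hS ha
  suffices ∃ i ∈ S, S ⊆ {i, i + 2, i + 4} by
    obtain ⟨i, hi, hsub⟩ := this
    exact ⟨i, Set.eq_pair_or_eq_triple_of_subset hi hsub hne⟩
  by_cases h4 : a - 4 ∈ S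
  · refine ⟨a - 4, h4, fun x hx => ?_⟩
    rcases hwin hx with h | h | h | h | h <;> rw [h] at hx ⊢
    · exact Or.inl rfl
    · exact Or.inr (Or.inl (by ring))
    · exact Or.inr (Or.inr (Set.mem_singleton_iff.mpr (by ring)))
    · exact (far h4 hx (Or.inl (by ring))).elim
    · exact (far h4 hx (Or.inr (by ring))).elim
  by_cases h2 : a - 2 ∈ S
  · refine ⟨a - 2, h2, fun x hx => ?_⟩
    rcases hwin hx with h | h | h | h | h <;> rw [h] at hx ⊢
    · exact (h4 hx).elim
    · exact Or.inl rfl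
    · exact Or.inr (Or.inl (by ring))
    · exact Or.inr (Or.inr (Set.mem_singleton_iff.mpr (by ring)))
    · exact (far h2 hx (Or.inl (by ring))).elim
  · refine ⟨a, ha, fun x hx => ?_⟩
    rcases hwin hx with h | h | h | h | h <;> rw [h] at hx ⊢
    · exact (h4 hx).elim
    · exact (h2 hx).elim
    · exact Or.inl rfl
    · exact Or.inr (Or.inl rfl)
    · exact Or.inr (Or.inr rfl)

end ZMod

theorem SimpleGraph.cycleGraph_adj_val {n : ℕ} {i j : Fin n} (h : (cycleGraph n).Adj i j) :
    i.val + 1 = j.val ∨ j.val + 1 = i.val ∨ (i.val = 0 ∧ j.val + 1 = n) ∨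
      (j.val = 0 ∧ i.val + 1 = n) := by
  have key {x y : Fin n} (hxy : (x - y).val = 1) :
      y.val + 1 = x.val ∨ (x.val = 0 ∧ y.val + 1 = n) := by
    have := x.isLt
    rcases le_or_gt y x with hle | hlt
    · rw [Fin.coe_sub_iff_le.mpr hle] at hxy; omega
    · rw [Fin.coe_sub_iff_lt.mpr hlt] at hxy; omega
  rcases cycleGraph_adj'.mp h with h | h
  · rcases key h with h | h <;> simp_all
  · rcases key h with h | h <;> simp_all

section

variable {V : Type*} {G : SimpleGraph V}

theorem containsInduced_pathGraph_cons {n : ℕ} (f : pathGraph (n + 1) ↪g G) {v : V}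
    (hv : v ∉ Set.range f) (hadj : ∀ j, G.Adj v (f j) ↔ j = 0) :
    ContainsInduced (pathGraph (n + 2)) G := by
  refine ⟨⟨⟨Fin.cons v f, Fin.cons_injective_iff.mpr ⟨hv, f.injective⟩⟩, fun {i j} => ?_⟩⟩
  simp only [Function.Embedding.coeFn_mk, pathGraph_adj]
  cases i using Fin.cases with
  | zero =>
    cases j using Fin.cases with
    | zero => simp
    | succ j =>
      rw [Fin.cons_zero, Fin.cons_succ, hadj, Fin.ext_iff]
      simp
  | succ i =>
    cases j using Fin.cases with
    | zero =>
      rw [Fin.cons_zero, Fin.cons_succ, G.adj_comm, hadj, Fin.ext_iff]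
      simp
    | succ j => simp [← pathGraph_adj]

theorem containsSubgraph_cycleGraph_cons {n : ℕ} (f : pathGraph (n + 1) →g G)
    (hf : Function.Injective f) {v : V} (hv : v ∉ Set.range f) (h0 : G.Adj v (f 0))
    (hlast : G.Adj v (f (Fin.last n))) : ContainsSubgraph (cycleGraph (n + 2)) G := by
  have hend {j : Fin (n + 1)} (hj : j.val = 0 ∨ j.val = n) : G.Adj v (f j) := by
    rcases hj with hj | hj
    · obtain rfl : j = 0 := Fin.ext hj
      exact h0
    · obtain rfl : j = Fin.last n := Fin.ext hj
      exact hlast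
  refine ⟨Fin.cons v f, Fin.cons_injective_iff.mpr ⟨hv, hf⟩, fun i j hij => ?_⟩
  have hij := cycleGraph_adj_val hij
  cases i using Fin.cases with
  | zero =>
    cases j using Fin.cases with
    | zero => simp at hij
    | succ j =>
      simp only [Fin.val_zero, Fin.val_succ] at hij
      rw [Fin.cons_zero, Fin.cons_succ]
      exact hend (by omega)
  | succ i =>
    cases j using Fin.cases with
    | zero =>
      simp only [Fin.val_zero, Fin.val_succ] at hij
      rw [Fin.cons_zero, Fin.cons_succ]
      exact (hend (by omega)).symm
    | succ j =>
      simp only [Fin.val_succ] at hij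
      rw [Fin.cons_succ, Fin.cons_succ]
      exact f.map_adj (pathGraph_adj.mpr (by omega))

variable {k : ℕ} {c : ZMod k → V}

def arcEmbedding (hinj : Function.Injective c)
    (hcyc : ∀ a b : ZMod k, G.Adj (c a) (c b) ↔ (b - a = 1 ∨ b - a = -1)) (a : ZMod k) {m : ℕ}
    (hm : m < k) : pathGraph m ↪g G where
  toFun j := c (a + (j : ℕ))
  inj' i j h := Fin.ext <| (ZMod.natCast_eq_natCast_iff_of_lt (by omega) (by omega)).mp
    (add_left_cancel (hinj h))
  map_rel_iff' {i j} := by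
    have hsucc (x y : Fin m) : (x : ZMod k) + 1 = (y : ℕ) ↔ (x : ℕ) + 1 = y := by
      exact_mod_cast ZMod.natCast_eq_natCast_iff_of_lt (k := k) (x := x + 1) (y := y)
        (by omega) (by omega)
    change G.Adj (c (a + (i : ℕ))) (c (a + (j : ℕ))) ↔ _
    rw [hcyc, add_sub_add_left_eq_sub, pathGraph_adj, ← hsucc, ← hsucc]
    exact or_congr ⟨fun h => by linear_combination -h, fun h => by linear_combination -h⟩
      ⟨fun h => by linear_combination h, fun h => by linear_combination h⟩

theorem arcEmbedding_apply (hinj : Function.Injective c)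
    (hcyc : ∀ a b : ZMod k, G.Adj (c a) (c b) ↔ (b - a = 1 ∨ b - a = -1)) (a : ZMod k) {m : ℕ}
    (hm : m < k) (j : Fin m) : arcEmbedding hinj hcyc a hm j = c (a + (j : ℕ)) :=
  rfl

theorem exists_ne_adj_of_not_containsInduced (hk : 2 ≤ k) (hinj : Function.Injective c)
    (hcyc : ∀ a b : ZMod k, G.Adj (c a) (c b) ↔ (b - a = 1 ∨ b - a = -1))
    (hP : ¬ ContainsInduced (pathGraph k) G) {v : V} (hv : v ∉ Set.range c) {a : ZMod k}
    (ha : G.Adj v (c a)) : ∃ b ≠ a, G.Adj v (c b) := by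
  by_contra! h
  obtain ⟨n, rfl⟩ : ∃ n, k = n + 2 := ⟨k - 2, by omega⟩
  refine hP (containsInduced_pathGraph_cons (arcEmbedding hinj hcyc a (m := n + 1) (by omega))
    (fun ⟨j, hj⟩ => hv ⟨_, hj⟩) fun j => ?_)
  rw [arcEmbedding_apply]
  refine ⟨fun hj => ?_, fun hj => by simpa [hj] using ha⟩
  have e : a + (j : ℕ) = a := of_not_not fun hne => h _ hne hj
  have : ((j : ℕ) : ZMod (n + 2)) = ((0 : ℕ) : ZMod (n + 2)) := by simpa using e
  exact Fin.ext ((ZMod.natCast_eq_natCast_iff_of_lt (by omega) (by omega)).mp this)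

theorem containsSubgraph_cycleGraph_of_adj (hinj : Function.Injective c)
    (hcyc : ∀ a b : ZMod k, G.Adj (c a) (c b) ↔ (b - a = 1 ∨ b - a = -1)) {v : V}
    (hv : v ∉ Set.range c) {a b : ZMod k} (ha : G.Adj v (c a)) (hb : G.Adj v (c b))
    (hlt : (b - a).val + 1 < k) : ContainsSubgraph (cycleGraph ((b - a).val + 2)) G := by
  have : NeZero k := ⟨by omega⟩
  let f := arcEmbedding hinj hcyc a hlt
  refine containsSubgraph_cycleGraph_cons f.toHom f.injective (fun ⟨j, hj⟩ => hv ⟨_, hj⟩) ?_ ?_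
  · simpa [f, arcEmbedding_apply] using ha
  · simpa [f, arcEmbedding_apply] using hb

theorem le_val_sub_of_odd (hinj : Function.Injective c)
    (hcyc : ∀ a b : ZMod k, G.Adj (c a) (c b) ↔ (b - a = 1 ∨ b - a = -1))
    (hG : ∀ m : ℕ, Odd m → 3 ≤ m → m < k - 2 → ¬ ContainsSubgraph (cycleGraph m) G) {v : V}
    (hv : v ∉ Set.range c) {a b : ZMod k} (ha : G.Adj v (c a)) (hb : G.Adj v (c b))
    (hodd : Odd (b - a).val) : k - 4 ≤ (b - a).val := by
  by_contra! hlt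
  obtain ⟨r, hr⟩ := hodd
  exact hG _ ⟨r + 1, by omega⟩ (by omega) (by omega)
    (containsSubgraph_cycleGraph_of_adj hinj hcyc hv ha hb (by omega))

theorem sub_mem_pm_two_pm_four_of_adj (hodd : Odd k) (hinj : Function.Injective c)
    (hcyc : ∀ a b : ZMod k, G.Adj (c a) (c b) ↔ (b - a = 1 ∨ b - a = -1))
    (hG : ∀ m : ℕ, Odd m → 3 ≤ m → m < k - 2 → ¬ ContainsSubgraph (cycleGraph m) G) {v : V}
    (hv : v ∉ Set.range c) {a b : ZMod k} (ha : G.Adj v (c a)) (hb : G.Adj v (c b))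
    (hab : a ≠ b) : b - a ∈ ({2, -2, 4, -4} : Set (ZMod k)) :=
  ZMod.mem_pm_two_pm_four_of_odd_val hodd (sub_ne_zero.mpr hab.symm)
    (le_val_sub_of_odd hinj hcyc hG hv ha hb)
    (by rw [neg_sub]; exact le_val_sub_of_odd hinj hcyc hG hv hb ha)

end

theorem neighborhood_of_induced_Ck_general
    (k : ℕ) (hk : 7 ≤ k) (hodd : Odd k) (V : Type) (G : SimpleGraph V)
    (hPfree : ¬ ContainsInduced (pathGraph k) G)
    (hnoShortOdd : ∀ m : ℕ, Odd m → 3 ≤ m → m < k - 2 →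
      ¬ ContainsSubgraph (cycleGraph m) G)
    (c : ZMod k → V) (hinj : Function.Injective c)
    (hcyc : ∀ a b : ZMod k, G.Adj (c a) (c b) ↔ (b - a = 1 ∨ b - a = -1))
    (v : V) (hv : v ∉ Set.range c) (hadj : ∃ a : ZMod k, G.Adj v (c a)) :
    ∃ i : ZMod k,
      {x : V | x ∈ Set.range c ∧ G.Adj v x} = {c i, c (i + 2)} ∨
      {x : V | x ∈ Set.range c ∧ G.Adj v x} = {c i, c (i + 4)} ∨
      {x : V | x ∈ Set.range c ∧ G.Adj v x} = {c i, c (i + 2), c (i + 4)} := by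
  obtain ⟨a, ha⟩ := hadj
  set N := {a : ZMod k | G.Adj v (c a)}
  have hpair : N.Pairwise fun a b => b - a ∈ ({2, -2, 4, -4} : Set (ZMod k)) :=
    fun _ ha _ hb => sub_mem_pm_two_pm_four_of_adj hodd hinj hcyc hnoShortOdd hv ha hb
  have hnt : N.Nontrivial := by
    obtain ⟨b, hba, hb⟩ := exists_ne_adj_of_not_containsInduced (by omega) hinj hcyc hPfree hv ha
    exact ⟨a, ha, b, hb, hba.symm⟩
  have himg : {x | x ∈ Set.range c ∧ G.Adj v x} = c '' N := by
    ext x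
    constructor
    · rintro ⟨⟨a, rfl⟩, h⟩
      exact ⟨a, h, rfl⟩
    · rintro ⟨a, h, rfl⟩
      exact ⟨⟨a, rfl⟩, h⟩
  obtain ⟨i, hi⟩ := ZMod.exists_eq_of_pairwise_sub_mem hk hodd hpair hnt
  refine ⟨i, ?_⟩
  rw [himg]
  rcases hi with h | h | h <;> simp [h, Set.image_insert_eq]

theorem neighborhood_of_induced_Ck
    (k : ℕ) (hk : 7 ≤ k) (hodd : Odd k) (V : Type) [Fintype V] (G : SimpleGraph V)
    (hPfree : ¬ ContainsInduced (pathGraph k) G)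
    (hnoShortOdd : ∀ m : ℕ, Odd m → 3 ≤ m → m < k - 2 →
      ¬ ContainsSubgraph (cycleGraph m) G)
    (c : ZMod k → V) (hinj : Function.Injective c)
    (hcyc : ∀ a b : ZMod k, G.Adj (c a) (c b) ↔ (b - a = 1 ∨ b - a = -1))
    (v : V) (hv : v ∉ Set.range c) (hadj : ∃ a : ZMod k, G.Adj v (c a)) :
    ∃ i : ZMod k,
      {x : V | x ∈ Set.range c ∧ G.Adj v x} = {c i, c (i + 2)} ∨
      {x : V | x ∈ Set.range c ∧ G.Adj v x} = {c i, c (i + 4)} ∨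
      {x : V | x ∈ Set.range c ∧ G.Adj v x} = {c i, c (i + 2), c (i + 4)} :=
  neighborhood_of_induced_Ck_general k hk hodd V G hPfree hnoShortOdd c hinj hcyc v hv hadj
end

section
/- Let k ≥ 7 be an odd integer and let G be a finite simple graph that is P_k-free, contains no induced cycle on k vertices, and contains no cycle on m vertices as a subgraph for any odd m with 3 ≤ m < k - 2. Let c : Z/(k-2)Z → V(G) be injective with c(a) adjacent to c(b) if and only if b - a = ±1 (so the image of c is an induced cycle on k-2 vertices), and let v be a vertex not in the image of c that has at least one neighbor in the image of c. Then there exists i ∈ Z/(k-2)Z such that the set of neighbors of v in the image of c is exactly {c(i)} or exactly {c(i), c(i+2)}. -/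
open SimpleGraph

/-! If `v` sees `c a` and `c (a + e)`, then `v` together with the arc
`c a, c (a + 1), …, c (a + e)` is a cycle of length `e.val + 2`. Since `k - 2` is odd, one of
the two arcs between two neighbours of `v` has odd length, and the absence of short odd cycles
forces that arc to be the one of length `k - 4`; so any two neighbours of `v` on the cycle are
at distance two, and on a cycle of length at least five at most two vertices are pairwise at
distance two. -/

section

variable {V : Type*} {G : SimpleGraph V}

lemma containsSubgraph_cycleGraph_of_injOn {m : ℕ} (f : ℕ → V)
    (hf : Set.InjOn f (Set.Iio (m + 2))) (hadj : ∀ i < m + 1, G.Adj (f i) (f (i + 1)))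
    (hclose : G.Adj (f (m + 1)) (f 0)) :
    ContainsSubgraph (cycleGraph (m + 2)) G := by
  have hstep : ∀ u : Fin (m + 2), G.Adj (f u) (f ↑(u + 1)) := by
    intro u
    rw [Fin.val_add_one]
    split_ifs with hu
    · simpa [hu] using hclose
    · exact hadj u (Fin.val_lt_last hu)
  refine ⟨fun u => f u, fun u w huw => Fin.ext (hf u.isLt w.isLt huw), fun u w huw => ?_⟩
  rcases cycleGraph_adj.mp huw with h | h
  · obtain rfl : u = w + 1 := by rw [← h, add_sub_cancel]
    exact (hstep w).symm
  · obtain rfl : w = u + 1 := by rw [← h, add_sub_cancel]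
    exact hstep u

variable {n : ℕ} [NeZero n] {c : ZMod n → V} {v : V}

lemma containsSubgraph_cycleGraph_of_adj_arc_ends (hc : Function.Injective c)
    (hcadj : ∀ a, G.Adj (c a) (c (a + 1))) (hv : v ∉ Set.range c) {a e : ZMod n}
    (ha : G.Adj v (c a)) (hae : G.Adj v (c (a + e))) :
    ContainsSubgraph (cycleGraph (e.val + 2)) G := by
  let f : ℕ → V
    | 0 => v
    | j + 1 => c (a + j)
  refine containsSubgraph_cycleGraph_of_injOn f ?_ ?_ ?_
  · have he := e.val_lt
    rintro (_ | i) hi (_ | j) hj hij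
    · rfl
    · exact absurd ⟨_, hij.symm⟩ hv
    · exact absurd ⟨_, hij⟩ hv
    · have := (ZMod.natCast_eq_natCast_iff' i j n).mp (add_left_cancel (hc hij))
      simp only [Set.mem_Iio] at hi hj
      rw [Nat.mod_eq_of_lt (by omega), Nat.mod_eq_of_lt (by omega)] at this
      rw [this]
  · rintro (_ | j) _
    · simpa [f] using ha
    · simpa [f, add_assoc] using hcadj (a + j)
  · simpa [f] using hae.symm

lemma sub_eq_neg_two_of_odd_val (hn : Odd n)
    (hshort : ∀ m : ℕ, Odd m → 3 ≤ m → m < n → ¬ ContainsSubgraph (cycleGraph m) G)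
    (hc : Function.Injective c) (hcadj : ∀ a, G.Adj (c a) (c (a + 1))) (hv : v ∉ Set.range c)
    {a b : ZMod n} (ha : G.Adj v (c a)) (hb : G.Adj v (c b)) (hodd : Odd (b - a).val) :
    b - a = -2 := by
  have hcycle : ContainsSubgraph (cycleGraph ((b - a).val + 2)) G :=
    containsSubgraph_cycleGraph_of_adj_arc_ends hc hcadj hv ha (by rwa [add_sub_cancel])
  have hlong : n ≤ (b - a).val + 2 := not_lt.mp fun hlt =>
    hshort _ (hodd.add_even even_two) (by obtain ⟨t, ht⟩ := hodd; omega) hlt hcycle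
  have hval : (b - a).val = n - 2 := by
    have := (b - a).val_lt
    obtain ⟨t, ht⟩ := hodd
    obtain ⟨s, hs⟩ := hn
    omega
  rw [← ZMod.natCast_zmod_val (b - a), hval, Nat.cast_sub (by have := hodd.pos; omega),
    ZMod.natCast_self, zero_sub, Nat.cast_ofNat]

lemma ZMod.odd_val_or_odd_neg_val (hn : Odd n) {e : ZMod n} (he : e ≠ 0) :
    Odd e.val ∨ Odd (-e).val := by
  rw [ZMod.neg_val, if_neg he]
  exact (Nat.even_or_odd e.val).symm.imp_right fun heven => Nat.Odd.sub_even e.val_lt.le hn heven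

lemma sub_eq_two_or_neg_two (hn : Odd n)
    (hshort : ∀ m : ℕ, Odd m → 3 ≤ m → m < n → ¬ ContainsSubgraph (cycleGraph m) G)
    (hc : Function.Injective c) (hcadj : ∀ a, G.Adj (c a) (c (a + 1))) (hv : v ∉ Set.range c)
    {a b : ZMod n} (ha : G.Adj v (c a)) (hb : G.Adj v (c b)) (hab : a ≠ b) :
    b - a = 2 ∨ b - a = -2 := by
  rcases ZMod.odd_val_or_odd_neg_val hn (sub_ne_zero.mpr hab.symm) with hodd | hodd
  · exact Or.inr (sub_eq_neg_two_of_odd_val hn hshort hc hcadj hv ha hb hodd)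
  · rw [neg_sub] at hodd
    have := sub_eq_neg_two_of_odd_val hn hshort hc hcadj hv hb ha hodd
    exact Or.inl (by linear_combination -this)

end

lemma exists_eq_singleton_or_eq_pair_of_sub_eq_two {R : Type*} [CommRing R] (h6 : (6 : R) ≠ 0)
    {S : Set R} (hS : S.Nonempty)
    (hsub : ∀ a ∈ S, ∀ b ∈ S, a ≠ b → b - a = 2 ∨ b - a = -2) :
    ∃ i, S = {i} ∨ S = {i, i + 2} := by
  obtain ⟨a, ha⟩ := hS
  have hpair : ∀ i ∈ S, i + 2 ∈ S → S = {i, i + 2} := by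
    refine fun i hi hi2 => Set.Subset.antisymm (fun x hx => ?_) (Set.insert_subset hi
      (Set.singleton_subset_iff.mpr hi2))
    by_contra hne
    simp only [Set.mem_insert_iff, Set.mem_singleton_iff, not_or] at hne
    rcases hsub i hi x hx (Ne.symm hne.1) with h | h
    · exact hne.2 (by linear_combination h)
    rcases hsub (i + 2) hi2 x hx (Ne.symm hne.2) with h' | h'
    · -- `x = i - 2` and `x = i + 4`
      exact h6 (by linear_combination h - h')
    · exact hne.1 (by linear_combination h')
  by_cases hb : ∃ b ∈ S, b ≠ a
  · obtain ⟨b, hb, hba⟩ := hb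
    rcases hsub a ha b hb hba.symm with h | h
    · exact ⟨a, Or.inr (hpair a ha (by rwa [← sub_eq_iff_eq_add'.mp h]))⟩
    · exact ⟨b, Or.inr (hpair b hb (by rwa [show b + 2 = a by linear_combination h]))⟩
  · push Not at hb
    exact ⟨a, Or.inl (Set.eq_singleton_iff_unique_mem.mpr ⟨ha, hb⟩)⟩

lemma ZMod.six_ne_zero_of_odd {n : ℕ} (hn : Odd n) (h5 : 5 ≤ n) : (6 : ZMod n) ≠ 0 := by
  intro h
  have hdvd := (ZMod.natCast_eq_zero_iff 6 n).mp (by exact_mod_cast h)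
  obtain rfl : n = 5 := by
    have := Nat.le_of_dvd (by norm_num) hdvd
    obtain ⟨t, ht⟩ := hn
    omega
  norm_num at hdvd

theorem neighborhood_of_induced_Ck_minus_two_general
    (k : ℕ) (hk : 7 ≤ k) (hodd : Odd k) (V : Type) (G : SimpleGraph V)
    (hnoShortOdd : ∀ m : ℕ, Odd m → 3 ≤ m → m < k - 2 →
      ¬ ContainsSubgraph (cycleGraph m) G)
    (c : ZMod (k - 2) → V) (hinj : Function.Injective c)
    (hcyc : ∀ a b : ZMod (k - 2), G.Adj (c a) (c b) ↔ (b - a = 1 ∨ b - a = -1))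
    (v : V) (hv : v ∉ Set.range c) (hadj : ∃ a : ZMod (k - 2), G.Adj v (c a)) :
    ∃ i : ZMod (k - 2),
      {x : V | x ∈ Set.range c ∧ G.Adj v x} = {c i} ∨
      {x : V | x ∈ Set.range c ∧ G.Adj v x} = {c i, c (i + 2)} := by
  have : NeZero (k - 2) := ⟨by omega⟩
  have hn : Odd (k - 2) := by obtain ⟨t, ht⟩ := hodd; exact ⟨t - 1, by omega⟩
  have h6 : (6 : ZMod (k - 2)) ≠ 0 := ZMod.six_ne_zero_of_odd hn (by omega)
  have hcadj : ∀ a, G.Adj (c a) (c (a + 1)) :=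
    fun a => (hcyc a (a + 1)).mpr (Or.inl (add_sub_cancel_left a 1))
  have hnbr : {x : V | x ∈ Set.range c ∧ G.Adj v x} = c '' (c ⁻¹' G.neighborSet v) :=
    Set.image_preimage_eq_range_inter.symm
  obtain ⟨i, hi⟩ := exists_eq_singleton_or_eq_pair_of_sub_eq_two h6 hadj
    fun a ha b hb hab => sub_eq_two_or_neg_two hn hnoShortOdd hinj hcadj hv ha hb hab
  refine ⟨i, ?_⟩
  rw [hnbr, ← Set.image_singleton, ← Set.image_pair]
  exact hi.imp (congrArg _) (congrArg _)

theorem neighborhood_of_induced_Ck_minus_two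
    (k : ℕ) (hk : 7 ≤ k) (hodd : Odd k) (V : Type) [Fintype V] (G : SimpleGraph V)
    (hPfree : ¬ ContainsInduced (pathGraph k) G)
    (hCkfree : ¬ ContainsInduced (cycleGraph k) G)
    (hnoShortOdd : ∀ m : ℕ, Odd m → 3 ≤ m → m < k - 2 →
      ¬ ContainsSubgraph (cycleGraph m) G)
    (c : ZMod (k - 2) → V) (hinj : Function.Injective c)
    (hcyc : ∀ a b : ZMod (k - 2), G.Adj (c a) (c b) ↔ (b - a = 1 ∨ b - a = -1))
    (v : V) (hv : v ∉ Set.range c) (hadj : ∃ a : ZMod (k - 2), G.Adj v (c a)) :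
    ∃ i : ZMod (k - 2),
      {x : V | x ∈ Set.range c ∧ G.Adj v x} = {c i} ∨
      {x : V | x ∈ Set.range c ∧ G.Adj v x} = {c i, c (i + 2)} :=
  neighborhood_of_induced_Ck_minus_two_general k hk hodd V G hnoShortOdd c hinj hcyc v hv hadj
end

section
/- Let k ≥ 7 be an odd integer and let f be a graph homomorphism from the cycle C_k to the cycle C_{k-2}. Then f is surjective; moreover there are exactly two vertices of C_{k-2} whose preimage under f has exactly two elements, these two vertices are adjacent in C_{k-2}, and every other vertex of C_{k-2} has exactly one preimage. -/
/-!
Each step `f (i + 1) - f i` is `±1` in `Fin (k - 2)`. Lifted to integers, the steps sum to a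
multiple of `m = k - 2` that is odd (there are `k` of them) and at most `k = m + 2` in absolute
value, hence to `±m`. So all steps but one equal the same unit `u = ±1`, and starting right after
the exceptional step, `f` runs through `a, a + u, a + 2u, …` for `m + 2` vertices: it wraps
around `C_m` once and then revisits exactly `a` and `a + u`.
-/

open SimpleGraph Finset
open scoped Fin.CommRing

theorem mul_eq_iff_eq_mul_of_mul_self_eq_one {M : Type*} [Monoid M] {u x w : M}
    (hu : u * u = 1) : x * u = w ↔ x = w * u := by
  constructor <;> intro h
  · rw [← h, mul_assoc, hu, mul_one]
  · rw [h, mul_assoc, hu, mul_one]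

theorem Fin.sum_apply_add_one_sub {n : ℕ} [NeZero n] {G : Type*} [AddCommGroup G]
    (g : Fin n → G) : ∑ i, (g (i + 1) - g i) = 0 := by
  rw [sum_sub_distrib, sub_eq_zero]
  exact Fintype.sum_equiv (Equiv.addRight 1) _ _ fun _ => rfl

theorem Fin.eq_add_nsmul_of_forall_ne_add_one {k : ℕ} [NeZero k] {A : Type*} [AddMonoid A]
    {g : Fin k → A} {d : A} {t : Fin k} (h : ∀ i ≠ t, g (i + 1) = g i + d) (y : Fin k) :
    g (t + 1 + y) = g (t + 1) + y.val • d := by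
  suffices ∀ j < k, g (t + 1 + j) = g (t + 1) + j • d by
    simpa only [Fin.cast_val_eq_self] using this y.val y.isLt
  intro j hj
  induction j with
  | zero => simp
  | succ j ih =>
    have hne : t + 1 + j ≠ t := fun heq => by
      have : ((j + 1 : ℕ) : Fin k) = 0 := by
        push_cast
        linear_combination heq
      exact absurd (Nat.le_of_dvd j.succ_pos (Fin.natCast_eq_zero.1 this)) (by omega)
    rw [Nat.cast_succ, ← add_assoc, h _ hne, ih (by omega), succ_nsmul, add_assoc]

theorem Fin.card_filter_natCast_val_eq {m : ℕ} [NeZero m] (hm : 2 ≤ m) (c : Fin m) :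
    #{y : Fin (m + 2) | (y.val : Fin m) = c} = if c.val < 2 then 2 else 1 := by
  have hmod : ∀ y : Fin (m + 2),
      ((y.val : Fin m) = c ↔ y.val = c.val ∨ y.val = c.val + m) := by
    intro y
    rw [Fin.ext_iff, Fin.val_natCast]
    rcases lt_or_ge y.val m with hy | hy
    · rw [Nat.mod_eq_of_lt hy]; omega
    · rw [Nat.mod_eq_sub_mod hy, Nat.mod_eq_of_lt (by omega)]; omega
  split_ifs with hc
  · rw [card_eq_two]
    refine ⟨⟨c.val, by omega⟩, ⟨c.val + m, by omega⟩, by simp [Fin.ext_iff]; omega, ?_⟩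
    ext y
    simp [hmod, Fin.ext_iff]
  · rw [card_eq_one]
    refine ⟨⟨c.val, by omega⟩, ?_⟩
    ext y
    simp only [mem_filter, mem_univ, true_and, hmod, mem_singleton, Fin.ext_iff]
    omega

theorem sum_eq_card_sub_two_mul_card_filter {ι : Type*} [Fintype ι] (e : ι → ℤ)
    (he : ∀ i, e i = 1 ∨ e i = -1) :
    ∑ i, e i = Fintype.card ι - 2 * #{i | e i = -1} := by
  classical
  have h : ∀ i, e i = 1 - 2 * if e i = -1 then 1 else 0 := fun i => by
    rcases he i with h | h <;> simp [h]
  rw [sum_congr rfl fun i _ => h i, sum_sub_distrib, ← mul_sum, sum_boole]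
  simp

theorem eq_one_or_eq_add_one_of_dvd_add_two_sub_two_mul {m d : ℕ} (hm : 3 ≤ m) (hodd : Odd m)
    (hd : d ≤ m + 2)
    (hdvd : (m : ℤ) ∣ m + 2 - 2 * d) : d = 1 ∨ d = m + 1 := by
  obtain ⟨c, hc⟩ := hdvd
  have hc1 : c ≤ 1 := by nlinarith
  have hc2 : -1 ≤ c := by nlinarith
  obtain ⟨r, rfl⟩ := hodd
  interval_cases c <;> omega

theorem exists_forall_ne_eq_of_card_filter_eq_one {ι α : Type*} [Fintype ι] [DecidableEq α]
    {e : ι → α} {a b : α} (he : ∀ i, e i = a ∨ e i = b) (hb : #{i | e i = b} = 1) :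
    ∃ t, ∀ i ≠ t, e i = a := by
  obtain ⟨t, ht⟩ := card_eq_one.1 hb
  refine ⟨t, fun i hi => (he i).resolve_right fun h => hi ?_⟩
  simpa [h] using ht.subset (mem_filter.2 ⟨mem_univ i, h⟩)

theorem exists_sign_forall_ne_eq_of_dvd_sum {ι : Type*} [Fintype ι] {m : ℕ} (hm : 3 ≤ m)
    (hodd : Odd m) (hcard : Fintype.card ι = m + 2) (e : ι → ℤ)
    (he : ∀ i, e i = 1 ∨ e i = -1) (hdvd : (m : ℤ) ∣ ∑ i, e i) :
    ∃ σ : ℤ, (σ = 1 ∨ σ = -1) ∧ ∃ t, ∀ i ≠ t, e i = σ := by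
  classical
  have hd : #{i | e i = -1} ≤ m + 2 := hcard ▸ card_filter_le _ _
  rw [sum_eq_card_sub_two_mul_card_filter e he, hcard] at hdvd
  push_cast at hdvd
  rcases eq_one_or_eq_add_one_of_dvd_add_two_sub_two_mul hm hodd hd hdvd with h | h
  · exact ⟨1, .inl rfl, exists_forall_ne_eq_of_card_filter_eq_one he h⟩
  · refine ⟨-1, .inr rfl,
      exists_forall_ne_eq_of_card_filter_eq_one (b := 1) (fun i => (he i).symm) ?_⟩
    have := card_filter_add_card_filter_not (s := univ) (fun i => e i = -1)
    have hne : ∀ i, ¬ e i = -1 ↔ e i = 1 := fun i => by rcases he i with h | h <;> simp [h]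
    simp only [hne, card_univ, hcard, h] at this
    omega

theorem SimpleGraph.cycleGraph_adj_iff_sub_eq {n : ℕ} [NeZero n] (hn : 2 ≤ n) {u v : Fin n} :
    (cycleGraph n).Adj u v ↔ v - u = 1 ∨ v - u = -1 := by
  obtain ⟨n, rfl⟩ : ∃ n', n = n' + 2 := ⟨n - 2, by omega⟩
  rw [cycleGraph_adj, ← neg_sub v u, neg_eq_iff_eq_neg, or_comm]

theorem SimpleGraph.cycleGraph_adj_add_one {n : ℕ} [NeZero n] (hn : 2 ≤ n) (i : Fin n) :
    (cycleGraph n).Adj i (i + 1) :=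
  (cycleGraph_adj_iff_sub_eq hn).2 (.inl (add_sub_cancel_left i 1))

theorem exists_sign_steps_of_hom_cycleGraph {k m : ℕ} [NeZero k] [NeZero m] (hk : 2 ≤ k)
    (hm : 2 ≤ m) (f : cycleGraph k →g cycleGraph m) :
    ∃ e : Fin k → ℤ, (∀ i, e i = 1 ∨ e i = -1) ∧ ∀ i, f (i + 1) = f i + e i := by
  classical
  refine ⟨fun i => if f (i + 1) - f i = 1 then 1 else -1,
    fun i => by dsimp only; split_ifs <;> simp, fun i => ?_⟩
  have hstep := (cycleGraph_adj_iff_sub_eq hm).1 (f.map_adj (cycleGraph_adj_add_one hk i))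
  dsimp only
  split_ifs with h
  · rw [Int.cast_one, ← h, add_sub_cancel]
  · rw [Int.cast_neg, Int.cast_one, ← hstep.resolve_left h, add_sub_cancel]

theorem exists_sign_forall_ne_apply_add_one {m : ℕ} [NeZero m] (hm : 3 ≤ m) (hodd : Odd m)
    (f : cycleGraph (m + 2) →g cycleGraph m) :
    ∃ u : Fin m, (u = 1 ∨ u = -1) ∧ ∃ t, ∀ i ≠ t, f (i + 1) = f i + u := by
  obtain ⟨e, he, hfe⟩ := exists_sign_steps_of_hom_cycleGraph (by omega) (by omega) f
  have hdvd : (m : ℤ) ∣ ∑ i, e i := by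
    rw [← CharP.intCast_eq_zero_iff (Fin m) m, Int.cast_sum]
    simpa only [hfe, add_sub_cancel_left] using Fin.sum_apply_add_one_sub f
  obtain ⟨σ, hσ, t, ht⟩ :=
    exists_sign_forall_ne_eq_of_dvd_sum hm hodd (Fintype.card_fin _) e he hdvd
  exact ⟨σ, by rcases hσ with rfl | rfl <;> simp, t, fun i hi => by rw [hfe, ht i hi]⟩

theorem exists_card_fiber_hom_cycleGraph {m : ℕ} [NeZero m] (hm : 3 ≤ m) (hodd : Odd m)
    (f : cycleGraph (m + 2) →g cycleGraph m) :
    ∃ a u : Fin m, (u = 1 ∨ u = -1) ∧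
      ∀ z, #{x | f x = z} = if z = a ∨ z = a + u then 2 else 1 := by
  obtain ⟨u, hu, t, ht⟩ := exists_sign_forall_ne_apply_add_one hm hodd f
  have huu : u * u = 1 := by rcases hu with rfl | rfl <;> simp
  refine ⟨f (t + 1), u, hu, fun z => ?_⟩
  have hlt : ((z - f (t + 1)) * u).val < 2 ↔ z = f (t + 1) ∨ z = f (t + 1) + u := by
    have h0 : z = f (t + 1) ↔ (z - f (t + 1)) * u = 0 := by
      rw [mul_eq_iff_eq_mul_of_mul_self_eq_one huu, zero_mul, sub_eq_zero]
    have h1 : z = f (t + 1) + u ↔ (z - f (t + 1)) * u = 1 := by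
      rw [mul_eq_iff_eq_mul_of_mul_self_eq_one huu, one_mul, sub_eq_iff_eq_add']
    rw [h0, h1]
    generalize (z - f (t + 1)) * u = c
    rw [Fin.ext_iff, Fin.ext_iff, Fin.val_zero, Fin.val_one', Nat.one_mod_eq_one.2 (by omega)]
    omega
  rw [← if_congr hlt rfl rfl, ← Fin.card_filter_natCast_val_eq (by omega)]
  refine (card_equiv (Equiv.addLeft (t + 1)) fun y => ?_).symm
  simp only [mem_filter, mem_univ, true_and, Equiv.coe_addLeft,
    Fin.eq_add_nsmul_of_forall_ne_add_one ht, nsmul_eq_mul, ← eq_sub_iff_add_eq',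
    mul_eq_iff_eq_mul_of_mul_self_eq_one huu]

theorem hom_cycleGraph_add_two_structure {m : ℕ} (hm : 3 ≤ m) (hodd : Odd m)
    (f : cycleGraph (m + 2) →g cycleGraph m) :
    Function.Surjective f ∧
    ∃ a b : Fin m, a ≠ b ∧ (cycleGraph m).Adj a b ∧
      #{x | f x = a} = 2 ∧ #{x | f x = b} = 2 ∧
      ∀ z, z ≠ a → z ≠ b → #{x | f x = z} = 1 := by
  have : NeZero m := ⟨by omega⟩
  obtain ⟨a, u, hu, hcard⟩ := exists_card_fiber_hom_cycleGraph hm hodd f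
  have : Nontrivial (Fin m) := Fin.nontrivial_iff_two_le.2 (by omega)
  have hu0 : u ≠ 0 := by rcases hu with rfl | rfl <;> simp
  refine ⟨fun z => ?_, a, a + u, by simpa using hu0,
    (cycleGraph_adj_iff_sub_eq (by omega)).2 (by rwa [add_sub_cancel_left]), by simp [hcard],
    by simp [hcard], fun z hza hzb => by simp [hcard, hza, hzb]⟩
  obtain ⟨x, hx⟩ : ({x | f x = z} : Finset _).Nonempty :=
    card_pos.1 (by rw [hcard]; split_ifs <;> norm_num)
  exact ⟨x, (mem_filter.1 hx).2⟩

theorem hom_Ck_to_Ckm2_structure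
    (k : ℕ) (hk : 7 ≤ k) (hodd : Odd k)
    (f : cycleGraph k →g cycleGraph (k - 2)) :
    Function.Surjective f ∧
    ∃ a b : Fin (k - 2), a ≠ b ∧ (cycleGraph (k - 2)).Adj a b ∧
      (Finset.univ.filter (fun x : Fin k => f x = a)).card = 2 ∧
      (Finset.univ.filter (fun x : Fin k => f x = b)).card = 2 ∧
      ∀ z : Fin (k - 2), z ≠ a → z ≠ b →
        (Finset.univ.filter (fun x : Fin k => f x = z)).card = 1 := by
  obtain ⟨m, rfl⟩ : ∃ m, k = m + 2 := ⟨k - 2, by omega⟩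
  exact hom_cycleGraph_add_two_structure (by omega) (by simpa [parity_simps] using hodd) f
end

section
/- Let m ≥ 3 be an odd integer. Then every graph homomorphism from the cycle C_m to itself is bijective. -/
/-
A homomorphism from a graph to `C_m` that misses a vertex `v` lands in the path `C_m - v`, so
composing with the bipartition of that path (by the parity of the distance from `v`) 2-colours
the source graph. An odd cycle has chromatic number 3, so every endomorphism of `C_m` is
surjective, hence bijective since `C_m` is finite.
-/

open SimpleGraph

theorem Fin.val_sub_eq_val_sub_add_one {n : ℕ} [NeZero n] {x y v : Fin n}
    (hxy : (y - x).val = 1) (hy : y ≠ v) : (y - v).val = (x - v).val + 1 := by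
  have hne : (y - v).val ≠ 0 := by simpa [← Fin.val_zero, Fin.val_inj, sub_eq_zero] using hy
  rw [show y - v = (x - v) + (y - x) by abel, Fin.val_add, hxy] at hne ⊢
  obtain hlt | heq : (x - v).val + 1 < n ∨ (x - v).val + 1 = n := by
    have := (x - v).isLt; omega
  · exact Nat.mod_eq_of_lt hlt
  · simp [heq] at hne

theorem SimpleGraph.cycleGraph_even_val_sub_iff_of_adj {n : ℕ} {x y v : Fin n}
    (hxy : (cycleGraph n).Adj x y) (hx : x ≠ v) (hy : y ≠ v) :
    Even (x - v).val ↔ ¬Even (y - v).val := by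
  have : NeZero n := ⟨by rintro rfl; exact v.elim0⟩
  rcases cycleGraph_adj'.mp hxy with h | h
  · rw [Fin.val_sub_eq_val_sub_add_one h hx, Nat.even_add_one]
  · rw [Fin.val_sub_eq_val_sub_add_one h hy, Nat.even_add_one, not_not]

theorem SimpleGraph.Hom.colorable_two_of_not_surjective {V : Type*} {G : SimpleGraph V} {n : ℕ}
    (f : G →g cycleGraph n) (hf : ¬Function.Surjective f) : G.Colorable 2 := by
  obtain ⟨v, hv⟩ := not_forall.mp hf
  have hfv (x : V) : f x ≠ v := fun h => hv ⟨x, h⟩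
  refine Coloring.colorable (α := Bool) <| Coloring.mk (fun x => decide (Even (f x - v).val)) ?_
  intro x y hxy
  have := cycleGraph_even_val_sub_iff_of_adj (f.map_adj hxy) (hfv x) (hfv y)
  simp only [ne_eq, decide_eq_decide]
  tauto

theorem odd_cycle_self_hom_bijective
    (m : ℕ) (hm : 3 ≤ m) (hodd : Odd m)
    (f : cycleGraph m →g cycleGraph m) :
    Function.Bijective f := by
  refine Finite.surjective_iff_bijective.mp (by_contra fun hf => ?_)
  have hle := (f.colorable_two_of_not_surjective hf).chromaticNumber_le
  rw [chromaticNumber_cycleGraph_of_odd m (by omega) hodd] at hle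
  norm_num at hle
end

section
/- Let k ≥ 7 be an odd integer and let G be a finite simple graph that is P_k-free and contains no cycle on m vertices as a subgraph for any odd m with 3 ≤ m < k - 2. Let c : Z/kZ → V(G) be injective with c(a) adjacent to c(b) if and only if b - a = ±1, and let u be a vertex not in the image of c whose set of neighbors in the image of c is exactly {c(i), c(i+2)} for some i ∈ Z/kZ. Then (1) every neighbor of u either lies in the image of c or has a neighbor in the image of c, and (2) if w is a neighbor of u not in the image of c whose set of neighbors in the image of c is exactly {c(j), c(j+2)} for some j ∈ Z/kZ, then j - i ∈ {1, -1, 3, -3} in Z/kZ. -/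
open SimpleGraph

/-!
If `u, w` lie off the cycle `c`, are adjacent, and `u ∼ c a`, `w ∼ c (a + t)`, then `u`, `w` and
the arc `c a, c (a + 1), …, c (a + t)` form a cycle on `t + 3` vertices. Since `k` is odd, one of
the two arcs between `c a` and `c b` has even length, so the ban on short odd cycles forces
`b - a = ±1, ±3` or `±5`. For `w ∼ c j, c (j + 2)`, the value `j - i = 5` would put `c (j + 2)` at
distance `7` from `c i` (and `j - i = -5` puts `c (i + 2)` at distance `7` from `c j`), which is
none of these when `k ≥ 7` is odd. A neighbour `x` of `u` with no neighbour on the cycle would give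
the induced path `x, u, c (i + 2), c (i + 3), …, c (i - 1)` on `k` vertices.
-/

theorem ZMod.natCast_inj_of_lt {k m n : ℕ} (hm : m < k) (hn : n < k) :
    (m : ZMod k) = n ↔ m = n := by
  rw [ZMod.natCast_eq_natCast_iff', Nat.mod_eq_of_lt hm, Nat.mod_eq_of_lt hn]

section Embeddings

variable {V : Type*} {G : SimpleGraph V}

theorem containsInduced_pathGraph_of_adj {n : ℕ} (f : ℕ → V) (hf : Set.InjOn f (Set.Iio n))
    (hadj : ∀ p q, p < q → q < n → (G.Adj (f p) (f q) ↔ p + 1 = q)) :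
    ContainsInduced (pathGraph n) G := by
  refine ⟨⟨⟨fun p => f p, fun p q h => Fin.ext (hf p.2 q.2 h)⟩, fun {p q} => ?_⟩⟩
  change G.Adj (f p) (f q) ↔ _
  rw [pathGraph_adj]
  rcases lt_trichotomy p.val q.val with h | h | h
  · rw [hadj _ _ h q.2]
    omega
  · rw [Fin.ext h]
    exact iff_of_false (G.irrefl) (by omega)
  · rw [G.adj_comm, hadj _ _ h p.2]
    omega

theorem containsSubgraph_cycleGraph_of_adj_s18 {n : ℕ} (f : ℕ → V) (hf : Set.InjOn f (Set.Iio n))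
    (hadj : ∀ m < n, G.Adj (f m) (f ((m + 1) % n))) :
    ContainsSubgraph (cycleGraph n) G := by
  refine ⟨fun p => f p, fun p q h => Fin.ext (hf p.2 q.2 h), fun p q hpq => ?_⟩
  obtain _ | n := n
  · exact p.elim0
  have succ_val : ∀ p q : Fin (n + 1), (p - q).val = 1 → p.val = (q.val + 1) % (n + 1) := by
    intro p q h
    calc p.val = (q + (p - q)).val := by rw [add_sub_cancel]
      _ = _ := by rw [Fin.val_add, h]
  rcases cycleGraph_adj'.mp hpq with h | h
  · simpa only [← succ_val p q h] using (hadj q q.2).symm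
  · simpa only [← succ_val q p h] using hadj p p.2

end Embeddings

section InducedCycle

variable {V : Type*} {G : SimpleGraph V} {k : ℕ} {c : ZMod k → V}

theorem adj_add_natCast_iff
    (hcyc : ∀ a b : ZMod k, G.Adj (c a) (c b) ↔ (b - a = 1 ∨ b - a = -1))
    (a : ZMod k) {m n : ℕ} (hmn : m < n) (hn : n + 1 < k) :
    G.Adj (c (a + m)) (c (a + n)) ↔ m + 1 = n := by
  rw [hcyc, add_sub_add_left_eq_sub]
  constructor
  · rintro (h | h)
    · have : (n : ZMod k) = (m + 1 : ℕ) := by push_cast; linear_combination h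
      exact ((ZMod.natCast_inj_of_lt (by omega) (by omega)).1 this).symm
    · have : (m : ZMod k) = (n + 1 : ℕ) := by push_cast; linear_combination -h
      have := (ZMod.natCast_inj_of_lt (by omega) (by omega)).1 this
      omega
  · rintro rfl
    exact .inl (by push_cast; ring)

theorem adj_iff_of_setOf_eq (hinj : Function.Injective c) {v : V} {l : ZMod k}
    (h : {x : V | x ∈ Set.range c ∧ G.Adj v x} = {c l, c (l + 2)}) (a : ZMod k) :
    G.Adj v (c a) ↔ a = l ∨ a = l + 2 := by
  simpa [hinj.eq_iff] using Set.ext_iff.mp h (c a)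

theorem adj_add_two_add_natCast_iff {u : V} {i : ZMod k}
    (huadj : ∀ a, G.Adj u (c a) ↔ a = i ∨ a = i + 2) {m : ℕ} (hm : m + 2 < k) :
    G.Adj u (c (i + 2 + m)) ↔ m = 0 := by
  rw [huadj]
  constructor
  · rintro (h | h)
    · have : ((m + 2 : ℕ) : ZMod k) = 0 := by push_cast; linear_combination h
      have := Nat.le_of_dvd (by omega) ((ZMod.natCast_eq_zero_iff _ _).mp this)
      omega
    · have : (m : ZMod k) = (0 : ℕ) := by push_cast; linear_combination h
      exact (ZMod.natCast_inj_of_lt (by omega) (by omega)).1 this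
  · rintro rfl
    simp

theorem containsInduced_pathGraph_of_neighbor_off_cycle (hinj : Function.Injective c)
    (hcyc : ∀ a b : ZMod k, G.Adj (c a) (c b) ↔ (b - a = 1 ∨ b - a = -1))
    {u x : V} (hu : u ∉ Set.range c) {i : ZMod k}
    (huadj : ∀ a, G.Adj u (c a) ↔ a = i ∨ a = i + 2) (hux : G.Adj u x)
    (hx : x ∉ Set.range c) (hxc : ∀ a, ¬ G.Adj x (c a)) :
    ContainsInduced (pathGraph k) G := by
  let f : ℕ → V := fun
    | 0 => x
    | 1 => u
    | m + 2 => c (i + 2 + m)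
  refine containsInduced_pathGraph_of_adj f ?_ ?_
  · intro p hp q hq h
    rcases p with _ | _ | p <;> rcases q with _ | _ | q
    · rfl
    · exact absurd h (G.ne_of_adj hux).symm
    · exact absurd ⟨_, h.symm⟩ hx
    · exact absurd h (G.ne_of_adj hux)
    · rfl
    · exact absurd ⟨_, h.symm⟩ hu
    · exact absurd ⟨_, h⟩ hx
    · exact absurd ⟨_, h⟩ hu
    · simp only [Set.mem_Iio] at hp hq
      rw [(ZMod.natCast_inj_of_lt (by omega) (by omega)).1 (add_left_cancel (hinj h))]
  · intro p q hpq hq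
    rcases p with _ | _ | p <;> rcases q with _ | _ | q
    all_goals try omega
    · exact iff_of_true hux.symm rfl
    · exact iff_of_false (hxc _) (by omega)
    · rw [adj_add_two_add_natCast_iff huadj (by omega)]
      omega
    · rw [adj_add_natCast_iff hcyc _ (by omega) (by omega)]
      omega

theorem containsSubgraph_cycleGraph_through_arc (hinj : Function.Injective c)
    (hcyc : ∀ a b : ZMod k, G.Adj (c a) (c b) ↔ (b - a = 1 ∨ b - a = -1))
    {u w : V} (hu : u ∉ Set.range c) (hw : w ∉ Set.range c) (huw : G.Adj u w)
    {a : ZMod k} {t : ℕ} (ht : t < k) (hua : G.Adj u (c a)) (hwb : G.Adj w (c (a + t))) :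
    ContainsSubgraph (cycleGraph (t + 3)) G := by
  let f : ℕ → V := fun m => if m ≤ t then c (a + m) else if m = t + 1 then w else u
  refine containsSubgraph_cycleGraph_of_adj_s18 f ?_ ?_
  · intro p hp q hq h
    simp only [Set.mem_Iio] at hp hq
    simp only [f] at h
    split_ifs at h with hpt hqt hqt' hpt' hqt hpt' hqt
    · exact (ZMod.natCast_inj_of_lt (by omega) (by omega)).1 (add_left_cancel (hinj h))
    · exact absurd ⟨_, h⟩ hw
    · exact absurd ⟨_, h⟩ hu
    · exact absurd ⟨_, h.symm⟩ hw
    · omega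
    · exact absurd h (G.ne_of_adj huw).symm
    · exact absurd ⟨_, h.symm⟩ hu
    · exact absurd h (G.ne_of_adj huw)
    · omega
  · intro m hm
    obtain hmt | rfl | rfl | rfl : m < t ∨ m = t ∨ m = t + 1 ∨ m = t + 2 := by omega
    · rw [Nat.mod_eq_of_lt (by omega)]
      simp only [f, if_pos hmt.le, if_pos (Nat.succ_le_of_lt hmt)]
      exact (hcyc _ _).2 (.inl (by push_cast; ring))
    · simpa [Nat.mod_eq_of_lt, f] using hwb.symm
    · simpa [Nat.mod_eq_of_lt, f] using huw.symm
    · simpa [f] using hua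

theorem le_of_even_of_arc (hnoShortOdd : ∀ m : ℕ, Odd m → 3 ≤ m → m < k - 2 →
      ¬ ContainsSubgraph (cycleGraph m) G)
    (hinj : Function.Injective c)
    (hcyc : ∀ a b : ZMod k, G.Adj (c a) (c b) ↔ (b - a = 1 ∨ b - a = -1))
    {u w : V} (hu : u ∉ Set.range c) (hw : w ∉ Set.range c) (huw : G.Adj u w)
    {a : ZMod k} {t : ℕ} (ht : t < k) (hua : G.Adj u (c a)) (hwb : G.Adj w (c (a + t)))
    (heven : Even t) : k - 5 ≤ t := by
  by_contra! h
  exact hnoShortOdd (t + 3) (heven.add_odd (by decide)) (by omega) (by omega)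
    (containsSubgraph_cycleGraph_through_arc hinj hcyc hu hw huw ht hua hwb)

theorem sub_mem_of_adj_of_adj (hodd : Odd k)
    (hnoShortOdd : ∀ m : ℕ, Odd m → 3 ≤ m → m < k - 2 → ¬ ContainsSubgraph (cycleGraph m) G)
    (hinj : Function.Injective c)
    (hcyc : ∀ a b : ZMod k, G.Adj (c a) (c b) ↔ (b - a = 1 ∨ b - a = -1))
    {u w : V} (hu : u ∉ Set.range c) (hw : w ∉ Set.range c) (huw : G.Adj u w)
    {a b : ZMod k} (hua : G.Adj u (c a)) (hwb : G.Adj w (c b)) :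
    b - a ∈ ({1, -1, 3, -3, 5, -5} : Set (ZMod k)) := by
  have : NeZero k := ⟨hodd.pos.ne'⟩
  set t := (b - a).val
  have htk : t < k := ZMod.val_lt _
  have hb : b = a + t := by rw [ZMod.natCast_zmod_val]; ring
  have ha : a = b + (k - t : ℕ) := by
    rw [Nat.cast_sub htk.le, ZMod.natCast_self, hb]; ring
  have hk := Nat.odd_iff.mp hodd
  obtain ⟨s, hs, hsub⟩ : ∃ s : ℕ, (s = 1 ∨ s = 3 ∨ s = 5) ∧ (b - a = s ∨ b - a = -s) := by
    rcases Nat.even_or_odd t with ht | ht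
    · have := le_of_even_of_arc hnoShortOdd hinj hcyc hu hw huw htk hua (hb ▸ hwb) ht
      have := Nat.even_iff.mp ht
      refine ⟨k - t, by omega, .inr ?_⟩
      linear_combination -ha
    · have := Nat.odd_iff.mp ht
      have := le_of_even_of_arc hnoShortOdd hinj hcyc hw hu huw.symm (by omega) hwb (ha ▸ hua)
        (Nat.even_iff.mpr (by omega))
      exact ⟨t, by omega, .inl (ZMod.natCast_zmod_val _).symm⟩
  rcases hs with rfl | rfl | rfl <;> rcases hsub with h | h <;> simp [h]

end InducedCycle

theorem ZMod.seven_notMem {k : ℕ} (hk : 7 ≤ k) (hodd : Odd k) :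
    (7 : ZMod k) ∉ ({1, -1, 3, -3, 5, -5} : Set (ZMod k)) := by
  have ne_zero : ∀ n : ℕ, 0 < n → n < 2 * k → n ≠ k → (n : ZMod k) ≠ 0 := fun n hn hnk hne h =>
    hne (Nat.eq_of_dvd_of_lt_two_mul hn.ne' ((ZMod.natCast_eq_zero_iff _ _).mp h) hnk)
  have hk2 := Nat.odd_iff.mp hodd
  simp only [Set.mem_insert_iff, Set.mem_singleton_iff, not_or]
  -- `7 = ±s` would make the odd `k ≥ 7` divide `7 ∓ s`, which is even or less than `7`.
  refine ⟨fun h => ne_zero 6 ?_ ?_ ?_ ?_, fun h => ne_zero 8 ?_ ?_ ?_ ?_,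
    fun h => ne_zero 4 ?_ ?_ ?_ ?_, fun h => ne_zero 10 ?_ ?_ ?_ ?_,
    fun h => ne_zero 2 ?_ ?_ ?_ ?_, fun h => ne_zero 12 ?_ ?_ ?_ ?_⟩
  all_goals first | omega | (push_cast; linear_combination h)

theorem neighbors_of_D_type_vertex_Ck_general
    (k : ℕ) (hk : 7 ≤ k) (hodd : Odd k) (V : Type) (G : SimpleGraph V)
    (hPfree : ¬ ContainsInduced (pathGraph k) G)
    (hnoShortOdd : ∀ m : ℕ, Odd m → 3 ≤ m → m < k - 2 →
      ¬ ContainsSubgraph (cycleGraph m) G)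
    (c : ZMod k → V) (hinj : Function.Injective c)
    (hcyc : ∀ a b : ZMod k, G.Adj (c a) (c b) ↔ (b - a = 1 ∨ b - a = -1))
    (u : V) (hu : u ∉ Set.range c) (i : ZMod k)
    (hui : {x : V | x ∈ Set.range c ∧ G.Adj u x} = {c i, c (i + 2)}) :
    (∀ x : V, G.Adj u x → x ∈ Set.range c ∨ ∃ a : ZMod k, G.Adj x (c a)) ∧
    (∀ (w : V) (j : ZMod k), G.Adj u w → w ∉ Set.range c →
      {x : V | x ∈ Set.range c ∧ G.Adj w x} = {c j, c (j + 2)} →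
      j - i ∈ ({1, -1, 3, -3} : Set (ZMod k))) := by
  have huadj := adj_iff_of_setOf_eq hinj hui
  refine ⟨fun x hux => ?_, fun w j huw hw hwj => ?_⟩
  · by_contra! hx
    exact hPfree
      (containsInduced_pathGraph_of_neighbor_off_cycle hinj hcyc hu huadj hux hx.1 hx.2)
  have hwadj := adj_iff_of_setOf_eq hinj hwj
  have h₁ : j - i ∈ ({1, -1, 3, -3, 5, -5} : Set (ZMod k)) :=
    sub_mem_of_adj_of_adj hodd hnoShortOdd hinj hcyc hu hw huw
      ((huadj i).2 (.inl rfl)) ((hwadj j).2 (.inl rfl))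
  have h₂ : j + 2 - i ∈ ({1, -1, 3, -3, 5, -5} : Set (ZMod k)) :=
    sub_mem_of_adj_of_adj hodd hnoShortOdd hinj hcyc hu hw huw
      ((huadj i).2 (.inl rfl)) ((hwadj (j + 2)).2 (.inr rfl))
  have h₃ : i + 2 - j ∈ ({1, -1, 3, -3, 5, -5} : Set (ZMod k)) :=
    sub_mem_of_adj_of_adj hodd hnoShortOdd hinj hcyc hw hu huw.symm
      ((hwadj j).2 (.inl rfl)) ((huadj (i + 2)).2 (.inr rfl))
  simp only [Set.mem_insert_iff, Set.mem_singleton_iff] at h₁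
  rcases h₁ with h | h | h | h | h | h
  iterate 4 simp [h]
  · rw [show j + 2 - i = 7 by linear_combination h] at h₂
    exact (ZMod.seven_notMem hk hodd h₂).elim
  · rw [show i + 2 - j = 7 by linear_combination -h] at h₃
    exact (ZMod.seven_notMem hk hodd h₃).elim

theorem neighbors_of_D_type_vertex_Ck
    (k : ℕ) (hk : 7 ≤ k) (hodd : Odd k) (V : Type) [Fintype V] (G : SimpleGraph V)
    (hPfree : ¬ ContainsInduced (pathGraph k) G)
    (hnoShortOdd : ∀ m : ℕ, Odd m → 3 ≤ m → m < k - 2 →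
      ¬ ContainsSubgraph (cycleGraph m) G)
    (c : ZMod k → V) (hinj : Function.Injective c)
    (hcyc : ∀ a b : ZMod k, G.Adj (c a) (c b) ↔ (b - a = 1 ∨ b - a = -1))
    (u : V) (hu : u ∉ Set.range c) (i : ZMod k)
    (hui : {x : V | x ∈ Set.range c ∧ G.Adj u x} = {c i, c (i + 2)}) :
    (∀ x : V, G.Adj u x → x ∈ Set.range c ∨ ∃ a : ZMod k, G.Adj x (c a)) ∧
    (∀ (w : V) (j : ZMod k), G.Adj u w → w ∉ Set.range c →
      {x : V | x ∈ Set.range c ∧ G.Adj w x} = {c j, c (j + 2)} →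
      j - i ∈ ({1, -1, 3, -3} : Set (ZMod k))) :=
  neighbors_of_D_type_vertex_Ck_general k hk hodd V G hPfree hnoShortOdd c hinj hcyc u hu i hui
end

section
/- Let k ≥ 7 be an odd integer and let G be a finite simple graph that is P_k-free, contains no induced cycle on k vertices, and contains no cycle on m vertices as a subgraph for any odd m with 3 ≤ m < k - 2. Let c : Z/(k-2)Z → V(G) be injective with c(a) adjacent to c(b) if and only if b - a = ±1. Let u and w be adjacent vertices, neither in the image of c, such that the set of neighbors of u in the image of c is exactly {c(i)} and the set of neighbors of w in the image of c is exactly {c(j)}. Then j - i ∈ {1, -1, 3, -3} in Z/(k-2)Z. -/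
open SimpleGraph

/-!
The arc of the `(k-2)`-cycle from `c i` to `c j`, closed up through `w` and `u`, is a cycle
of length `(j - i).val + 3`; the complementary arc gives one of length `(i - j).val + 3`.
The two lengths add up to the odd number `k + 4`, so one of them is odd, and since `G` has
no odd cycle shorter than `k - 2`, that arc has length `k - 5` or `k - 3`, i.e. `-3` or `-1`
modulo `k - 2`.
-/

open Function

section PathTuple

variable {V : Type*} {G : SimpleGraph V}

def IsPathTuple (G : SimpleGraph V) {m : ℕ} (f : Fin (m + 1) → V) : Prop :=
  Injective f ∧ ∀ t : Fin m, G.Adj (f t.castSucc) (f t.succ)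

lemma IsPathTuple.snoc {m : ℕ} {g : Fin (m + 1) → V} (hg : IsPathTuple G g) {v : V}
    (hv : v ∉ Set.range g) (hadj : G.Adj (g (Fin.last m)) v) :
    IsPathTuple G (Fin.snoc g v : Fin (m + 2) → V) := by
  refine ⟨Fin.snoc_injective_of_injective hg.1 hv, fun t => ?_⟩
  induction t using Fin.lastCases with
  | last => simpa using hadj
  | cast r =>
    rw [Fin.succ_castSucc, Fin.snoc_castSucc, Fin.snoc_castSucc]
    exact hg.2 r

lemma IsPathTuple.containsSubgraph_cycleGraph {m : ℕ} {f : Fin (m + 2) → V}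
    (hf : IsPathTuple G f) (hclose : G.Adj (f (Fin.last (m + 1))) (f 0)) :
    ContainsSubgraph (cycleGraph (m + 2)) G := by
  have hstep : ∀ s : Fin (m + 2), G.Adj (f s) (f (s + 1)) := by
    intro s
    induction s using Fin.lastCases with
    | last => simpa using hclose
    | cast r => simpa [Fin.coeSucc_eq_succ] using hf.2 r
  refine ⟨f, hf.1, fun s t hst => ?_⟩
  rcases cycleGraph_adj.mp hst with h | h
  · simpa [eq_add_of_sub_eq h, add_comm] using (hstep t).symm
  · simpa [eq_add_of_sub_eq h, add_comm] using hstep s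

lemma isPathTuple_arc {n : ℕ} {c : ZMod n → V} (hc : Injective c)
    (hcyc : ∀ a, G.Adj (c a) (c (a + 1))) (i : ZMod n) {a : ℕ} (ha : a < n) :
    IsPathTuple G (fun s : Fin (a + 1) => c (i + (s : ℕ))) := by
  refine ⟨fun s t hst => Fin.ext ?_, fun t => ?_⟩
  · have := (ZMod.natCast_eq_natCast_iff' _ _ _).mp (add_left_cancel (hc hst))
    rwa [Nat.mod_eq_of_lt (by omega), Nat.mod_eq_of_lt (by omega)] at this
  · simpa [add_assoc] using hcyc (i + (t : ℕ))

lemma containsSubgraph_cycleGraph_of_arc {n : ℕ} [NeZero n] {c : ZMod n → V} (hc : Injective c)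
    (hcyc : ∀ a, G.Adj (c a) (c (a + 1))) {u w : V} (huw : G.Adj u w)
    (hu : u ∉ Set.range c) (hw : w ∉ Set.range c) {i j : ZMod n}
    (hui : G.Adj u (c i)) (hwj : G.Adj w (c j)) :
    ContainsSubgraph (cycleGraph ((j - i).val + 3)) G := by
  have harc := isPathTuple_arc hc hcyc i (ZMod.val_lt (j - i))
  have hrange : ∀ x, x ∉ Set.range c →
      x ∉ Set.range (fun s : Fin ((j - i).val + 1) => c (i + (s : ℕ))) :=
    fun x hx ⟨s, hs⟩ => hx ⟨_, hs⟩
  have hw' := harc.snoc (hrange w hw) (by simpa using hwj.symm)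
  have hu' := hw'.snoc (v := u) (by simpa [huw.ne] using hrange u hu) (by simpa using huw.symm)
  exact hu'.containsSubgraph_cycleGraph (by simpa using hui)

end PathTuple

lemma ZMod.even_val_or_even_val_neg {n : ℕ} [NeZero n] (hn : Odd n) (x : ZMod n) :
    Even x.val ∨ Even (-x).val := by
  by_cases hx : x = 0
  · simp [hx]
  have : NeZero x := ⟨hx⟩
  rw [ZMod.val_neg_of_ne_zero]
  rcases Nat.even_or_odd x.val with h | h
  · exact Or.inl h
  · exact Or.inr (Nat.Odd.sub_odd hn h)

lemma ZMod.eq_neg_one_or_neg_three {n : ℕ} [NeZero n] (hn : Odd n) {x : ZMod n}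
    (heven : Even x.val) (hle : n ≤ x.val + 3) : x = -1 ∨ x = -3 := by
  have hlt := ZMod.val_lt x
  obtain ⟨p, hp⟩ := hn
  obtain ⟨q, hq⟩ := heven
  have hzero : ∀ d : ℕ, x.val + d = n → x = -d := fun d hd =>
    eq_neg_of_add_eq_zero_left <| by
      rw [← ZMod.natCast_zmod_val x, ← Nat.cast_add, hd, ZMod.natCast_self]
  have : x.val + 1 = n ∨ x.val + 3 = n := by omega
  rcases this with h | h
  · exact Or.inl (by simpa using hzero 1 h)
  · exact Or.inr (by simpa using hzero 3 h)

theorem adjacent_D_type_vertices_Ckm2_general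
    (k : ℕ) (hk : 7 ≤ k) (hodd : Odd k) (V : Type) (G : SimpleGraph V)
    (hnoShortOdd : ∀ m : ℕ, Odd m → 3 ≤ m → m < k - 2 →
      ¬ ContainsSubgraph (cycleGraph m) G)
    (c : ZMod (k - 2) → V) (hinj : Function.Injective c)
    (hcyc : ∀ a b : ZMod (k - 2), G.Adj (c a) (c b) ↔ (b - a = 1 ∨ b - a = -1))
    (u w : V) (huw : G.Adj u w)
    (hu : u ∉ Set.range c) (hw : w ∉ Set.range c)
    (i j : ZMod (k - 2))
    (hui : {x : V | x ∈ Set.range c ∧ G.Adj u x} = {c i})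
    (hwj : {x : V | x ∈ Set.range c ∧ G.Adj w x} = {c j}) :
    j - i ∈ ({1, -1, 3, -3} : Set (ZMod (k - 2))) := by
  have : NeZero (k - 2) := ⟨by omega⟩
  have hn : Odd (k - 2) := by obtain ⟨p, rfl⟩ := hodd; exact ⟨p - 1, by omega⟩
  have hstep : ∀ a, G.Adj (c a) (c (a + 1)) := fun a => (hcyc a (a + 1)).mpr (by simp)
  have hui' : G.Adj u (c i) := (hui.symm.subset rfl).2
  have hwj' : G.Adj w (c j) := (hwj.symm.subset rfl).2
  have hshort : ∀ {x y : ZMod (k - 2)} {u' w' : V}, G.Adj u' w' → u' ∉ Set.range c →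
      w' ∉ Set.range c → G.Adj u' (c x) → G.Adj w' (c y) → Even (y - x).val →
      y - x = -1 ∨ y - x = -3 := fun h h₁ h₂ h₃ h₄ heven =>
    ZMod.eq_neg_one_or_neg_three hn heven <| not_lt.mp fun hlt =>
      hnoShortOdd _ (heven.add_odd (by decide)) (by omega) hlt
        (containsSubgraph_cycleGraph_of_arc hinj hstep h h₁ h₂ h₃ h₄)
  rcases ZMod.even_val_or_even_val_neg hn (j - i) with h | h
  · rcases hshort huw hu hw hui' hwj' h with h | h <;> simp [h]
  · rw [neg_sub] at h
    rcases hshort huw.symm hw hu hwj' hui' h with h | h <;>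
      simp [← neg_sub i j, h]

theorem adjacent_D_type_vertices_Ckm2
    (k : ℕ) (hk : 7 ≤ k) (hodd : Odd k) (V : Type) [Fintype V] (G : SimpleGraph V)
    (hPfree : ¬ ContainsInduced (pathGraph k) G)
    (hCkfree : ¬ ContainsInduced (cycleGraph k) G)
    (hnoShortOdd : ∀ m : ℕ, Odd m → 3 ≤ m → m < k - 2 →
      ¬ ContainsSubgraph (cycleGraph m) G)
    (c : ZMod (k - 2) → V) (hinj : Function.Injective c)
    (hcyc : ∀ a b : ZMod (k - 2), G.Adj (c a) (c b) ↔ (b - a = 1 ∨ b - a = -1))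
    (u w : V) (huw : G.Adj u w)
    (hu : u ∉ Set.range c) (hw : w ∉ Set.range c)
    (i j : ZMod (k - 2))
    (hui : {x : V | x ∈ Set.range c ∧ G.Adj u x} = {c i})
    (hwj : {x : V | x ∈ Set.range c ∧ G.Adj w x} = {c j}) :
    j - i ∈ ({1, -1, 3, -3} : Set (ZMod (k - 2))) :=
  adjacent_D_type_vertices_Ckm2_general k hk hodd V G hnoShortOdd c hinj hcyc u w huw hu hw i j hui
    hwj
end
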